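/- arXiv:1406.5146 — 7 statements merged into one kernel-verified Lean document; each statement's English description precedes it below -/
import Mathlib

section
/- Fix indices $r \ne s$ in $\{1,\dots,n\}$ and let $g(p) = \frac{p^r}{p^s + p^r}$ on the open simplex $\Delta_n$. Then $\sum_{i,j=1}^n p^i(\delta^i_j - p^j)\, \partial_{p^i}\partial_{p^j} g(p) = 0$ for all $p \in \Delta_n$. -/
open scoped BigOperators

noncomputable section

/-- The open standard orthogonal simplex in ℝⁿ. -/
def stdSimplexO (n : ℕ) : Set (Fin n → ℝ) :=
  {p | (∀ i, 0 < p i) ∧ ∑ i, p i < 1}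

/-- The closed standard orthogonal simplex in ℝⁿ. -/
def stdSimplexC (n : ℕ) : Set (Fin n → ℝ) :=
  {p | (∀ i, 0 ≤ p i) ∧ ∑ i, p i ≤ 1}

/-- First partial derivative in coordinate direction `i`. -/
def pd {n : ℕ} (u : (Fin n → ℝ) → ℝ) (i : Fin n) (p : Fin n → ℝ) : ℝ :=
  fderiv ℝ u p (Pi.single i 1)

/-- Second partial derivative `∂_j ∂_i`. -/
def pd2 {n : ℕ} (u : (Fin n → ℝ) → ℝ) (i j : Fin n) (p : Fin n → ℝ) : ℝ :=
  pd (pd u i) j p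

/-- Kronecker delta. -/
def kdelta {n : ℕ} (i j : Fin n) : ℝ := if i = j then 1 else 0

/-- Kolmogorov backward (Wright–Fisher) operator `L_n^*`. -/
def Lb {n : ℕ} (u : (Fin n → ℝ) → ℝ) (p : Fin n → ℝ) : ℝ :=
  (1/2) * ∑ i, ∑ j, p i * (kdelta i j - p j) * pd2 u i j p

/-- Kolmogorov forward (Wright–Fisher) operator `L_n`. -/
def Lf {n : ℕ} (u : (Fin n → ℝ) → ℝ) (p : Fin n → ℝ) : ℝ :=
  (1/2) * ∑ i, ∑ j, pd2 (fun q => q i * (kdelta i j - q j) * u q) i j p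

/-! The ratio `g = q r / (q s + q r)` depends only on the coordinates `r` and `s`, so its Hessian
is supported on `{r, s}²`. With `t = p s + p r` the quotient rule gives
`∂²_rr g = -2 p s / t³`, `∂²_ss g = 2 p r / t³` and `∂_r ∂_s g = ∂_s ∂_r g = (p r - p s) / t³`;
weighted by `p i (δ i j - p j)` these four entries sum to
`2 p r p s ((p r - 1) + (1 - p s) - (p r - p s)) / t³ = 0`. -/

section PartialDerivatives

variable {n : ℕ} {u v : (Fin n → ℝ) → ℝ} {p : Fin n → ℝ}

theorem pd_eq_of_hasFDerivAt {u' : (Fin n → ℝ) →L[ℝ] ℝ} (h : HasFDerivAt u u' p) (i : Fin n) :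
    pd u i p = u' (Pi.single i 1) := by
  rw [pd, h.fderiv]

theorem pd_apply (k i : Fin n) : pd (fun q => q k) i p = kdelta i k := by
  rw [pd_eq_of_hasFDerivAt (hasFDerivAt_apply k p)]
  simp [Pi.single_apply, kdelta, eq_comm]

theorem pd_add (hu : DifferentiableAt ℝ u p) (hv : DifferentiableAt ℝ v p) (i : Fin n) :
    pd (fun q => u q + v q) i p = pd u i p + pd v i p := by
  rw [pd, fderiv_fun_add hu hv]
  rfl

theorem pd_sub (hu : DifferentiableAt ℝ u p) (hv : DifferentiableAt ℝ v p) (i : Fin n) :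
    pd (fun q => u q - v q) i p = pd u i p - pd v i p := by
  rw [pd, fderiv_fun_sub hu hv]
  rfl

theorem pd_mul_const (hu : DifferentiableAt ℝ u p) (c : ℝ) (i : Fin n) :
    pd (fun q => u q * c) i p = pd u i p * c := by
  rw [pd, pd, fderiv_mul_const hu]
  exact mul_comm _ _

theorem pd_pow (hu : DifferentiableAt ℝ u p) (m : ℕ) (i : Fin n) :
    pd (fun q => u q ^ m) i p = m * u p ^ (m - 1) * pd u i p := by
  rw [pd, fderiv_fun_pow m hu]
  simp only [nsmul_eq_mul, smul_apply, smul_eq_mul, pd]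

theorem pd_div (hu : DifferentiableAt ℝ u p) (hv : DifferentiableAt ℝ v p) (hp : v p ≠ 0)
    (i : Fin n) :
    pd (fun q => u q / v q) i p = (pd u i p * v p - u p * pd v i p) / v p ^ 2 := by
  simp only [div_eq_mul_inv]
  have h : HasFDerivAt (fun q => u q * (v q)⁻¹) _ p :=
    hu.hasFDerivAt.mul ((hasDerivAt_inv hp).comp_hasFDerivAt p hv.hasFDerivAt)
  rw [pd_eq_of_hasFDerivAt h, pd, pd]
  simp only [neg_smul, smul_neg, add_apply, neg_apply,
    smul_apply, smul_eq_mul]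
  field_simp
  ring

theorem pd_ratio (r s i : Fin n) (hp : p s + p r ≠ 0) :
    pd (fun q => q r / (q s + q r)) i p
      = (p s * kdelta i r - p r * kdelta i s) / (p s + p r) ^ 2 := by
  rw [pd_div (by fun_prop) (by fun_prop) hp, pd_add (by fun_prop) (by fun_prop), pd_apply,
    pd_apply]
  ring

theorem pd2_ratio (r s i j : Fin n) (hp : p s + p r ≠ 0) :
    pd2 (fun q => q r / (q s + q r)) i j p
      = ((kdelta j s * kdelta i r - kdelta j r * kdelta i s) * (p s + p r)
          - 2 * (p s * kdelta i r - p r * kdelta i s) * (kdelta j s + kdelta j r))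
        / (p s + p r) ^ 3 := by
  have hnhds : {q : Fin n → ℝ | q s + q r ≠ 0} ∈ nhds p :=
    (isOpen_ne_fun (by fun_prop) (by fun_prop)).mem_nhds hp
  have hloc : pd (fun q => q r / (q s + q r)) i =ᶠ[nhds p]
      fun q => (q s * kdelta i r - q r * kdelta i s) / (q s + q r) ^ 2 :=
    Filter.eventually_of_mem hnhds fun q hq => pd_ratio r s i hq
  rw [pd2, pd, hloc.fderiv_eq, ← pd, pd_div (by fun_prop) (by fun_prop) (pow_ne_zero 2 hp),
    pd_sub (by fun_prop) (by fun_prop), pd_mul_const (by fun_prop), pd_mul_const (by fun_prop),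
    pd_pow (by fun_prop), pd_add (by fun_prop) (by fun_prop), pd_apply, pd_apply]
  field_simp
  ring

end PartialDerivatives

theorem stmt1 (n : ℕ) (r s : Fin n) (hrs : r ≠ s) :
    ∀ p ∈ stdSimplexO n,
      ∑ i, ∑ j, p i * (kdelta i j - p j) *
        pd2 (fun q => q r / (q s + q r)) i j p = 0 := by
  rintro p ⟨hpos, -⟩
  have hp : p s + p r ≠ 0 := (add_pos (hpos s) (hpos r)).ne'
  simp only [pd2_ratio r s _ _ hp]
  rw [Fintype.sum_eq_add r s hrs fun i ⟨hir, his⟩ =>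
    Finset.sum_eq_zero fun j _ => by simp [kdelta, hir, his]]
  rw [Fintype.sum_eq_add r s hrs fun j ⟨hjr, hjs⟩ => by simp [kdelta, hjr, hjs],
    Fintype.sum_eq_add r s hrs fun j ⟨hjr, hjs⟩ => by simp [kdelta, hjr, hjs]]
  simp only [kdelta, if_neg hrs, if_neg hrs.symm]
  field_simp
  ring
end
end

section
/- Let $r \in \{1,\dots,n\}$ and let $h(p) = \frac{p^r}{1 - \sum_{l \ne r} p^l}$ on $\Delta_n$ (this corresponds to $p^r/(p^0+p^r)$ with $p^0 = 1 - \sum_l p^l$). Then $\sum_{i,j=1}^n p^i(\delta^i_j - p^j)\, \partial_{p^i}\partial_{p^j} h(p) = 0$ on $\Delta_n$. -/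
open scoped BigOperators

noncomputable section

/-! With the linear functionals `X q = q r` and `S q = ∑_{l ≠ r} q l`, the function is
`h = X / (1 - S)`, whose Hessian is explicit:
`∂_i ∂_j h = (X_i S_j + X_j S_i) / D² + 2 X S_i S_j / D³` with `D = 1 - S` and
`X_i = X (e_i)`, `S_i = S (e_i)`. Writing `Q(u, v) = ∑ p_i u_i v_i - (∑ p_i u_i)(∑ p_j v_j)`
for the bilinear form of the operator, the sum equals `2 Q(X, S) / D² + 2 X Q(S, S) / D³`.
Since `X_i S_i = 0` and `S_i² = S_i`, we get `Q(X, S) = -X S` and `Q(S, S) = S (1 - S)`,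
and the two terms cancel. -/

section
variable {E : Type*} [NormedAddCommGroup E] [NormedSpace ℝ E] (X S : E →L[ℝ] ℝ) {q : E}

theorem hasFDerivAt_inv_one_sub (hq : S q ≠ 1) :
    HasFDerivAt (fun q => (1 - S q)⁻¹) ((1 - S q)⁻¹ ^ 2 • S) q := by
  refine ((hasDerivAt_inv (sub_ne_zero.2 hq.symm)).comp_hasFDerivAt q
    (S.hasFDerivAt.const_sub 1)).congr_fderiv ?_
  rw [neg_smul_neg, inv_pow]

theorem fderiv_div_one_sub_apply (hq : S q ≠ 1) (v : E) :
    fderiv ℝ (fun q => X q / (1 - S q)) q v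
      = X v * (1 - S q)⁻¹ + X q * S v * (1 - S q)⁻¹ ^ 2 := by
  simp only [div_eq_mul_inv]
  rw [(X.hasFDerivAt.fun_mul (hasFDerivAt_inv_one_sub S hq)).fderiv]
  simp only [inv_pow, add_apply, smul_apply, smul_eq_mul]
  ring

theorem fderiv_fderiv_div_one_sub_apply (hq : S q ≠ 1) (v w : E) :
    fderiv ℝ (fun q => fderiv ℝ (fun q => X q / (1 - S q)) q v) q w
      = (X v * S w + X w * S v) * (1 - S q)⁻¹ ^ 2
        + 2 * X q * (1 - S q)⁻¹ ^ 3 * (S v * S w) := by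
  have hfirst : (fun q => fderiv ℝ (fun q => X q / (1 - S q)) q v)
      =ᶠ[nhds q] fun q => X v * (1 - S q)⁻¹ + X q * S v * (1 - S q)⁻¹ ^ 2 :=
    Filter.eventually_of_mem ((isOpen_ne_fun S.continuous continuous_const).mem_nhds hq)
      fun q' hq' => fderiv_div_one_sub_apply X S hq' v
  have he := hasFDerivAt_inv_one_sub S hq
  rw [hfirst.fderiv_eq, (((hasFDerivAt_const (X v) q).fun_mul he).fun_add
    ((X.hasFDerivAt.fun_mul (hasFDerivAt_const (S v) q)).fun_mul (he.pow 2))).fderiv]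
  simp only [add_apply, smul_apply, zero_apply, smul_eq_mul, nsmul_eq_mul]
  ring

end

theorem pd2_div_one_sub {n : ℕ} (X S : (Fin n → ℝ) →L[ℝ] ℝ) {p : Fin n → ℝ} (hp : S p ≠ 1)
    (i j : Fin n) :
    pd2 (fun q => X q / (1 - S q)) i j p
      = (X (Pi.single i 1) * S (Pi.single j 1) + X (Pi.single j 1) * S (Pi.single i 1))
          * (1 - S p)⁻¹ ^ 2
        + 2 * X p * (1 - S p)⁻¹ ^ 3 * (S (Pi.single i 1) * S (Pi.single j 1)) :=
  fderiv_fderiv_div_one_sub_apply X S hp _ _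

open Finset

theorem sum_mul_apply_single {n : ℕ} (L : (Fin n → ℝ) →L[ℝ] ℝ) (p : Fin n → ℝ) :
    ∑ i, p i * L (Pi.single i 1) = L p := by
  conv_rhs => rw [pi_eq_sum_univ' p]
  simp [map_sum]

theorem sum_mul_kdelta_sub_mul_mul {n : ℕ} (p u v : Fin n → ℝ) :
    ∑ i, ∑ j, p i * (kdelta i j - p j) * (u i * v j)
      = ∑ i, p i * u i * v i - (∑ i, p i * u i) * ∑ j, p j * v j := by
  simp only [kdelta, mul_sub, sub_mul, mul_ite, mul_one, mul_zero, ite_mul, zero_mul,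
    sum_sub_distrib, sum_ite_eq, mem_univ, if_true, sum_mul_sum]
  congr 1
  · exact sum_congr rfl fun i _ => by ring
  · exact sum_congr rfl fun i _ => sum_congr rfl fun j _ => by ring

theorem sum_mul_kdelta_sub_mul_quadratic {n : ℕ} (p u v : Fin n → ℝ) (α β : ℝ) :
    ∑ i, ∑ j, p i * (kdelta i j - p j) * ((u i * v j + u j * v i) * α + β * (v i * v j))
      = 2 * α * (∑ i, p i * u i * v i - (∑ i, p i * u i) * ∑ j, p j * v j)
        + β * (∑ i, p i * v i * v i - (∑ i, p i * v i) * ∑ j, p j * v j) := by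
  have hsplit (i j : Fin n) :
      p i * (kdelta i j - p j) * ((u i * v j + u j * v i) * α + β * (v i * v j))
        = α * (p i * (kdelta i j - p j) * (u i * v j))
          + α * (p i * (kdelta i j - p j) * (v i * u j))
          + β * (p i * (kdelta i j - p j) * (v i * v j)) := by ring
  simp only [hsplit, sum_add_distrib, ← mul_sum, sum_mul_kdelta_sub_mul_mul]
  have hdiag : ∑ i, p i * v i * u i = ∑ i, p i * u i * v i := sum_congr rfl fun i _ => by ring
  rw [hdiag]
  ring

theorem stmt3 (n : ℕ) (r : Fin n) :
    ∀ p ∈ stdSimplexO n,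
      ∑ i, ∑ j, p i * (kdelta i j - p j) *
        pd2 (fun q => q r / (1 - ∑ l ∈ Finset.univ.erase r, q l)) i j p = 0 := by
  rintro p ⟨hpos, hsum⟩
  set X : (Fin n → ℝ) →L[ℝ] ℝ := ContinuousLinearMap.proj r
  set S : (Fin n → ℝ) →L[ℝ] ℝ := ∑ l ∈ univ.erase r, ContinuousLinearMap.proj l
  have hh : (fun q : Fin n → ℝ => q r / (1 - ∑ l ∈ univ.erase r, q l))
      = fun q => X q / (1 - S q) := by
    ext q; simp [X, S]
  have hX (i : Fin n) : X (Pi.single i 1) = if i = r then 1 else 0 := by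
    simp [X, Pi.single_apply, eq_comm]
  have hS (i : Fin n) : S (Pi.single i 1) = if i = r then 0 else 1 := by
    by_cases h : i = r <;> simp [S, Pi.single_apply, h, eq_comm]
  have hSp : S p < 1 := by
    simp only [S, sum_erase_eq_sub (mem_univ r), sub_apply, _root_.sum_apply,
      ContinuousLinearMap.proj_apply]
    linarith [hpos r]
  have hXS : ∑ i, p i * X (Pi.single i 1) * S (Pi.single i 1) = 0 :=
    sum_eq_zero fun i _ => by rw [hX, hS]; split_ifs <;> ring
  have hSS : ∑ i, p i * S (Pi.single i 1) * S (Pi.single i 1) = S p := by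
    rw [← sum_mul_apply_single S]
    exact sum_congr rfl fun i _ => by rw [hS]; split_ifs <;> ring
  rw [hh]
  simp only [pd2_div_one_sub X S hSp.ne]
  rw [sum_mul_kdelta_sub_mul_quadratic, hXS, hSS, sum_mul_apply_single X, sum_mul_apply_single S]
  field_simp [sub_ne_zero.2 hSp.ne']
  ring
end
end

section
/- Let $s \in \{1,\dots,n\}$ and let $h(p) = \frac{1 - \sum_{l=1}^n p^l}{1 - \sum_{l \ne s} p^l}$ on $\Delta_n$ (this is $p^0/(p^s+p^0)$). Then $\sum_{i,j=1}^n p^i(\delta^i_j - p^j)\, \partial_{p^i}\partial_{p^j} h(p) = 0$ on $\Delta_n$. -/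
open scoped BigOperators

noncomputable section

/-!
Write `N = 1 - ∑ₗ pˡ` and `D = 1 - ∑_{l ∈ u} pˡ` (both affine) and `e` for the indicator of `u`.
The Hessian of `N / D` is `-(eᵢ + eⱼ) / D² + (2N / D³) eᵢ eⱼ`. For any matrix
`a (eᵢ + eⱼ) + b eᵢ eⱼ`, the form `∑ pⁱ (δᵢⱼ - pʲ) Hᵢⱼ` equals `(∑_{l ∈ u} pˡ) (2aN + bD)`
because `e² = e`, and here `2aN + bD = 0`. For `u = {l ≠ s}`, `D = p⁰ + pˢ > 0` on the simplex.
-/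

open Finset

variable {n : ℕ}

theorem sum_mul_kdelta_sub_mul_rankTwo (p e : Fin n → ℝ) (he : ∀ i, e i * e i = e i) (a b : ℝ) :
    ∑ i, ∑ j, p i * (kdelta i j - p j) * (a * (e i + e j) + b * (e i * e j)) =
      (∑ i, p i * e i) * (2 * a * (1 - ∑ i, p i) + b * (1 - ∑ i, p i * e i)) := by
  have hdiag : ∀ i, ∑ j, p i * kdelta i j * (a * (e i + e j) + b * (e i * e j)) =
      (2 * a + b) * (p i * e i) := by
    intro i
    simp only [kdelta, mul_ite, mul_one, mul_zero, ite_mul, zero_mul, sum_ite_eq, mem_univ,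
      if_true]
    linear_combination p i * b * he i
  have hoff : ∑ i, ∑ j, p i * p j * (a * (e i + e j) + b * (e i * e j)) =
      2 * a * (∑ i, p i) * (∑ i, p i * e i) + b * (∑ i, p i * e i) ^ 2 := by
    have hsplit : ∀ i j, p i * p j * (a * (e i + e j) + b * (e i * e j)) =
        a * ((p i * e i) * p j) + a * (p i * (p j * e j)) + b * ((p i * e i) * (p j * e j)) :=
      fun i j => by ring
    calc _ = a * ((∑ i, p i * e i) * ∑ j, p j) + a * ((∑ i, p i) * ∑ j, p j * e j) +
          b * ((∑ i, p i * e i) * ∑ j, p j * e j) := by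
          rw [sum_mul_sum, sum_mul_sum, sum_mul_sum]
          simp only [mul_sum, ← sum_add_distrib, hsplit]
      _ = _ := by ring
  have hexpand : ∀ i j, p i * (kdelta i j - p j) * (a * (e i + e j) + b * (e i * e j)) =
      p i * kdelta i j * (a * (e i + e j) + b * (e i * e j)) -
        p i * p j * (a * (e i + e j) + b * (e i * e j)) :=
    fun i j => by ring
  simp only [hexpand, sum_sub_distrib, hdiag, ← mul_sum, hoff]
  ring

theorem hasFDerivAt_one_sub_sum (u : Finset (Fin n)) (p : Fin n → ℝ) :
    HasFDerivAt (fun q : Fin n → ℝ => 1 - ∑ l ∈ u, q l)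
      (-∑ l ∈ u, ContinuousLinearMap.proj (R := ℝ) (φ := fun _ : Fin n => ℝ) l) p :=
  (HasFDerivAt.fun_sum fun l _ =>
    (ContinuousLinearMap.proj (R := ℝ) (φ := fun _ : Fin n => ℝ) l).hasFDerivAt).const_sub 1

theorem sum_proj_single (u : Finset (Fin n)) (j : Fin n) :
    (∑ l ∈ u, ContinuousLinearMap.proj (R := ℝ) (φ := fun _ : Fin n => ℝ) l) (Pi.single j 1) =
      if j ∈ u then 1 else 0 := by
  simp [Pi.single_apply]

theorem pd_div_s4 {f g : (Fin n → ℝ) → ℝ} {f' g' : (Fin n → ℝ) →L[ℝ] ℝ} {p : Fin n → ℝ}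
    (hf : HasFDerivAt f f' p) (hg : HasFDerivAt g g' p) (hp : g p ≠ 0) (j : Fin n) :
    pd (fun q => f q / g q) j p =
      (f' (Pi.single j 1) * g p - f p * g' (Pi.single j 1)) / g p ^ 2 := by
  have h : HasFDerivAt (fun q => f q * (g q)⁻¹) (f p • -(g p ^ 2)⁻¹ • g' + (g p)⁻¹ • f') p :=
    hf.mul ((hasDerivAt_inv hp).comp_hasFDerivAt p hg)
  simp only [pd, div_eq_mul_inv, h.fderiv, add_apply, smul_apply, smul_eq_mul]
  field_simp
  ring

theorem pd_one_sub_sum_div (u : Finset (Fin n)) {p : Fin n → ℝ} (hp : 1 - ∑ l ∈ u, p l ≠ 0)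
    (i : Fin n) :
    pd (fun q => (1 - ∑ l, q l) / (1 - ∑ l ∈ u, q l)) i p =
      ((if i ∈ u then 1 else 0) * (1 - ∑ l, p l) - (1 - ∑ l ∈ u, p l)) /
        (1 - ∑ l ∈ u, p l) ^ 2 := by
  rw [pd_div_s4 (hasFDerivAt_one_sub_sum univ p) (hasFDerivAt_one_sub_sum u p) hp]
  simp only [neg_apply, sum_proj_single, mem_univ, if_true]
  ring

theorem pd2_one_sub_sum_div (u : Finset (Fin n)) {p : Fin n → ℝ} (hp : 1 - ∑ l ∈ u, p l ≠ 0)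
    (i j : Fin n) :
    pd2 (fun q => (1 - ∑ l, q l) / (1 - ∑ l ∈ u, q l)) i j p =
      -((1 - ∑ l ∈ u, p l) ^ 2)⁻¹ * ((if i ∈ u then 1 else 0) + (if j ∈ u then 1 else 0)) +
        2 * (1 - ∑ l, p l) / (1 - ∑ l ∈ u, p l) ^ 3 *
          ((if i ∈ u then 1 else 0) * (if j ∈ u then 1 else 0)) := by
  have hopen : IsOpen {q : Fin n → ℝ | 1 - ∑ l ∈ u, q l ≠ 0} :=
    isOpen_ne.preimage (by fun_prop)
  have hpd : pd (fun q => (1 - ∑ l, q l) / (1 - ∑ l ∈ u, q l)) i =ᶠ[nhds p]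
      fun q => ((if i ∈ u then 1 else 0) * (1 - ∑ l, q l) - (1 - ∑ l ∈ u, q l)) /
        (1 - ∑ l ∈ u, q l) ^ 2 := by
    filter_upwards [hopen.mem_nhds hp] with q hq using pd_one_sub_sum_div u hq i
  have hnum := ((hasFDerivAt_one_sub_sum univ p).const_mul (if i ∈ u then (1 : ℝ) else 0)).fun_sub
    (hasFDerivAt_one_sub_sum u p)
  rw [pd2, pd, hpd.fderiv_eq, ← pd,
    pd_div_s4 hnum ((hasFDerivAt_one_sub_sum u p).pow 2) (pow_ne_zero 2 hp)]
  simp only [sub_apply, smul_apply, neg_apply, sum_proj_single, mem_univ, if_true, smul_eq_mul]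
  field_simp
  split_ifs <;> ring

theorem sum_mul_kdelta_sub_mul_pd2_one_sub_sum_div (u : Finset (Fin n)) {p : Fin n → ℝ}
    (hp : 1 - ∑ l ∈ u, p l ≠ 0) :
    ∑ i, ∑ j, p i * (kdelta i j - p j) *
      pd2 (fun q => (1 - ∑ l, q l) / (1 - ∑ l ∈ u, q l)) i j p = 0 := by
  have hmass : ∑ i, p i * (if i ∈ u then 1 else 0) = ∑ l ∈ u, p l := by
    simp only [mul_ite, mul_one, mul_zero, sum_ite_mem, univ_inter]
  simp only [pd2_one_sub_sum_div u hp]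
  rw [sum_mul_kdelta_sub_mul_rankTwo p _ (fun i => by split_ifs <;> norm_num), hmass]
  field_simp
  ring

theorem stmt4 (n : ℕ) (s : Fin n) :
    ∀ p ∈ stdSimplexO n,
      ∑ i, ∑ j, p i * (kdelta i j - p j) *
        pd2 (fun q => (1 - ∑ l, q l) / (1 - ∑ l ∈ Finset.univ.erase s, q l)) i j p = 0 := by
  rintro p ⟨hpos, hsum⟩
  refine sum_mul_kdelta_sub_mul_pd2_one_sub_sum_div _ (ne_of_gt ?_)
  rw [sum_erase_eq_sub (mem_univ s)]
  linarith [hpos s]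
end
end

section
/- Let $s \ne 0$, $r = 0$, and for $p \in \Delta_n$ define the projection $\pi(p) = \tilde p$ with $\tilde p^s = 0$ and $\tilde p^i = p^i$ for $i \ne s$ (so the mass of coordinate $s$ is absorbed into $p^0 = 1-\sum p^i$). Let $\psi$ be a smooth function on a neighborhood of $\pi(\Delta_n)$ satisfying $\frac{1}{2}\sum_{m,n \ne s} \tilde p^m(\delta^m_n - \tilde p^n)\partial_{\tilde p^m}\partial_{\tilde p^n}\psi(\tilde p) = -\kappa\, \psi(\tilde p)$ for all $\tilde p$ there. Then the composite $u(p) := \psi(\pi(p))$ satisfies $L_n^* u(p) = -\kappa\, u(p)$ for all $p \in \Delta_n$, where $L_n^* u = \frac{1}{2}\sum_{i,j=1}^n p^i(\delta^i_j - p^j)\partial_{p^i}\partial_{p^j} u$. -/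
open scoped BigOperators

noncomputable section

/-- Extension of an eigenfunction from the face `{p^s = 0}` by composing with the
projection that sets coordinate `s` to zero (the lost mass is absorbed into `p^0`). -/
theorem stmt5 (n : ℕ) (s : Fin n) (κ : ℝ) (ψ : (Fin n → ℝ) → ℝ)
    (V : Set (Fin n → ℝ)) (hV : IsOpen V)
    (hVsub : (fun p => Function.update p s 0) '' stdSimplexO n ⊆ V)
    (hψ : ContDiffOn ℝ (⊤ : ℕ∞) ψ V)
    (heig : ∀ p ∈ stdSimplexO n,
      (1/2) * ∑ m ∈ Finset.univ.erase s, ∑ m' ∈ Finset.univ.erase s,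
          (Function.update p s 0) m * (kdelta m m' - (Function.update p s 0) m') *
            pd2 ψ m m' (Function.update p s 0)
        = -κ * ψ (Function.update p s 0)) :
    ∀ p ∈ stdSimplexO n,
      Lb (fun q => ψ (Function.update q s 0)) p = -κ * ψ (Function.update p s 0) := by
  classical
  set L : (Fin n → ℝ) →L[ℝ] (Fin n → ℝ) :=
    ContinuousLinearMap.pi (fun j => if j = s then 0 else ContinuousLinearMap.proj j) with hLdef
  have hL : ∀ q, L q = Function.update q s 0 := by
    intro q; funext j
    by_cases h : j = s <;> simp [hLdef, h, Function.update_apply]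
  have hLe : ∀ i : Fin n, L (Pi.single i 1) =
      if i = s then 0 else Pi.single i 1 := by
    intro i
    rw [hL]
    by_cases h : i = s
    · rw [if_pos h, h]; funext j
      by_cases hj : j = s <;>
        simp [hj, Function.update_apply, Pi.single_eq_of_ne]
    · rw [if_neg h]; funext j
      by_cases hj : j = s
      · rw [hj]; simp [Function.update_apply, Pi.single_eq_of_ne (Ne.symm h)]
      · simp [Function.update_apply, hj]
  have key : ∀ q, L q ∈ V → ∀ i j : Fin n,
      pd2 (fun q => ψ (Function.update q s 0)) i j q =
        if i = s ∨ j = s then 0 else pd2 ψ i j (L q) := by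
    intro q hqV i j
    set W : Set (Fin n → ℝ) := L ⁻¹' V with hW
    have hWopen : IsOpen W := hV.preimage L.continuous
    have hqW : q ∈ W := hqV
    have hcont : ∀ x ∈ W, ContDiffAt ℝ (⊤ : ℕ∞) ψ (L x) := fun x hx =>
      hψ.contDiffAt (hV.mem_nhds hx)
    have hpd1 : ∀ x ∈ W, pd (fun q => ψ (Function.update q s 0)) i x =
        (if i = s then 0 else pd ψ i (L x)) := by
      intro x hx
      have hdψ : DifferentiableAt ℝ ψ (L x) := (hcont x hx).differentiableAt (by simp)
      have hcomp : (fun q => ψ (Function.update q s 0)) = ψ ∘ L := by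
        funext y; simp [hL]
      rw [pd, hcomp, fderiv_comp x hdψ L.differentiableAt, L.fderiv]
      simp only [ContinuousLinearMap.coe_comp', Function.comp_apply, hLe i]
      by_cases h : i = s
      · simp [h]
      · simp [h, pd]
    by_cases hi : i = s
    · have hev : pd (fun q => ψ (Function.update q s 0)) i =ᶠ[nhds q] fun _ => (0:ℝ) := by
        filter_upwards [hWopen.mem_nhds hqW] with x hx
        rw [hpd1 x hx, if_pos hi]
      rw [pd2, pd, hev.fderiv_eq]
      simp [hi]
    · have hev : pd (fun q => ψ (Function.update q s 0)) i =ᶠ[nhds q]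
          fun x => pd ψ i (L x) := by
        filter_upwards [hWopen.mem_nhds hqW] with x hx
        rw [hpd1 x hx, if_neg hi]
      have hdpd : DifferentiableAt ℝ (pd ψ i) (L q) := by
        have h1 : ContDiffAt ℝ (⊤ : ℕ∞) (fderiv ℝ ψ) (L q) :=
          (hcont q hqW).fderiv_right (m := (⊤ : ℕ∞)) (by simp)
        have h2 : DifferentiableAt ℝ (fderiv ℝ ψ) (L q) := h1.differentiableAt (by simp)
        exact ((ContinuousLinearMap.apply ℝ ℝ (Pi.single i 1)).differentiableAt).comp _ h2
      rw [pd2, pd, hev.fderiv_eq]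
      have hre : (fun x => pd ψ i (L x)) = (pd ψ i) ∘ L := rfl
      rw [hre, fderiv_comp q hdpd L.differentiableAt, L.fderiv]
      simp only [ContinuousLinearMap.coe_comp', Function.comp_apply, hLe j]
      by_cases hj : j = s
      · simp [hi, hj]
      · simp [hi, hj, pd2, pd]
  intro p hp
  have hpV : L p ∈ V := by
    rw [hL]; exact hVsub ⟨p, hp, rfl⟩
  have hkey := key p hpV
  rw [Lb]
  have hsum : (∑ i, ∑ j, p i * (kdelta i j - p j) *
        pd2 (fun q => ψ (Function.update q s 0)) i j p)
      = ∑ m ∈ Finset.univ.erase s, ∑ m' ∈ Finset.univ.erase s,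
          (Function.update p s 0) m * (kdelta m m' - (Function.update p s 0) m') *
            pd2 ψ m m' (Function.update p s 0) := by
    rw [← Finset.sum_subset (Finset.subset_univ (Finset.univ.erase s))]
    · apply Finset.sum_congr rfl
      intro i hi
      have hine : i ≠ s := (Finset.mem_erase.mp hi).1
      rw [← Finset.sum_subset (Finset.subset_univ (Finset.univ.erase s))]
      · apply Finset.sum_congr rfl
        intro j hj
        have hjne : j ≠ s := (Finset.mem_erase.mp hj).1
        rw [hkey i j, if_neg (by simp [hine, hjne]), hL,
          Function.update_apply, Function.update_apply, if_neg hine, if_neg hjne]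
      · intro j _ hj
        have hjs : j = s := by
          by_contra h
          exact hj (Finset.mem_erase.mpr ⟨h, Finset.mem_univ j⟩)
        rw [hkey i j, if_pos (Or.inr hjs), mul_zero]
    · intro i _ hi
      have his : i = s := by
        by_contra h
        exact hi (Finset.mem_erase.mpr ⟨h, Finset.mem_univ i⟩)
      apply Finset.sum_eq_zero
      intro j _
      rw [hkey i j, if_pos (Or.inl his), mul_zero]
  rw [hsum]
  exact heig p hp
end
end

section
/- Let $r \ne s$ with $r,s \in \{1,\dots,n\}$, and define $\pi^{r,s}(p) = \tilde p$ by $\tilde p^s = 0$, $\tilde p^r = p^s + p^r$, and $\tilde p^i = p^i$ otherwise. Suppose $\psi$ is smooth near $\pi^{r,s}(\Delta_n)$ and satisfies $\frac{1}{2}\sum_{m,n \ne s} \tilde p^m(\delta^m_n - \tilde p^n)\partial_{\tilde p^m}\partial_{\tilde p^n}\psi = -\kappa\psi$ on that set. Then $u(p) := \psi(\pi^{r,s}(p))$ satisfies $L_n^* u = -\kappa u$ on $\Delta_n$, where $L_n^* u = \frac{1}{2}\sum_{i,j=1}^n p^i(\delta^i_j - p^j) \partial_{p^i}\partial_{p^j}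 u$. -/
open scoped BigOperators

noncomputable section

/-- The projection `π^{r,s}`: sets `p^s = 0` and `p^r = p^s + p^r`. -/
def projRS {n : ℕ} (r s : Fin n) (p : Fin n → ℝ) : Fin n → ℝ :=
  Function.update (Function.update p r (p s + p r)) s 0

lemma projRS_apply {n : ℕ} (r s : Fin n) (hrs : r ≠ s) (p : Fin n → ℝ) (m : Fin n) :
    projRS r s p m = if m = s then 0 else if m = r then p s + p r else p m := by
  simp only [projRS, Function.update_apply]

/-- `projRS` as a linear map. -/
def projLin {n : ℕ} (r s : Fin n) (hrs : r ≠ s) : (Fin n → ℝ) →ₗ[ℝ] (Fin n → ℝ) where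
  toFun := projRS r s
  map_add' p q := by
    funext m
    simp only [projRS_apply r s hrs, Pi.add_apply]
    split_ifs <;> ring
  map_smul' c p := by
    funext m
    simp only [projRS_apply r s hrs, Pi.smul_apply, RingHom.id_apply, smul_eq_mul]
    split_ifs <;> ring

/-- `projRS` as a continuous linear map. -/
def projCLM {n : ℕ} (r s : Fin n) (hrs : r ≠ s) : (Fin n → ℝ) →L[ℝ] (Fin n → ℝ) :=
  (projLin r s hrs).toContinuousLinearMap

lemma projCLM_apply {n : ℕ} (r s : Fin n) (hrs : r ≠ s) (p : Fin n → ℝ) :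
    projCLM r s hrs p = projRS r s p := rfl

lemma projRS_single {n : ℕ} (r s : Fin n) (hrs : r ≠ s) (i : Fin n) :
    projRS r s (Pi.single i 1) = Pi.single (if i = s then r else i) (1 : ℝ) := by
  funext m
  simp only [projRS_apply r s hrs, Pi.single_apply]
  by_cases his : i = s <;> by_cases hms : m = s <;> by_cases hmr : m = r <;>
    subst_eqs <;> simp_all <;> aesop

/-- The key combinatorial identity. -/
lemma key_sum {n : ℕ} (r s : Fin n) (hrs : r ≠ s) (p : Fin n → ℝ) (A : Fin n → Fin n → ℝ) :
    (∑ i, ∑ j, p i * (kdelta i j - p j) *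
        A (if i = s then r else i) (if j = s then r else j))
      = ∑ m ∈ Finset.univ.erase s, ∑ m' ∈ Finset.univ.erase s,
          projRS r s p m * (kdelta m m' - projRS r s p m') * A m m' := by
  classical
  have hrE : r ∈ Finset.univ.erase s := Finset.mem_erase.2 ⟨hrs, Finset.mem_univ r⟩
  set E := Finset.univ.erase s with hE
  -- value of projRS on E
  have hq : ∀ m ∈ E, projRS r s p m = p m + (if m = r then p s else 0) := by
    intro m hm
    have hms : m ≠ s := (Finset.mem_erase.1 hm).1
    rw [projRS_apply r s hrs, if_neg hms]
    split_ifs with h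
    · rw [h]; ring
    · ring
  -- RHS decomposition
  have hR : (∑ m ∈ E, ∑ m' ∈ E, projRS r s p m * (kdelta m m' - projRS r s p m') * A m m')
      = (∑ m ∈ E, ∑ m' ∈ E, p m * (kdelta m m' - p m') * A m m')
        + ((∑ m ∈ E, -(p m * p s) * A m r)
          + ((∑ m' ∈ E, p s * (kdelta r m' - p m') * A r m')
            + (-(p s * p s) * A r r))) := by
    have step : ∀ m ∈ E, (∑ m' ∈ E, projRS r s p m * (kdelta m m' - projRS r s p m') * A m m')
        = (∑ m' ∈ E, p m * (kdelta m m' - p m') * A m m')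
          + ((-(p m * p s) * A m r)
            + ((if m = r then ∑ m' ∈ E, p s * (kdelta m m' - p m') * A m m' else 0)
              + (if m = r then -(p s * p s) * A m r else 0))) := by
      intro m hm
      have e1 : ∀ m' ∈ E, projRS r s p m * (kdelta m m' - projRS r s p m') * A m m'
          = p m * (kdelta m m' - p m') * A m m'
            + ((if m' = r then -(p m * p s) * A m m' else 0)
              + ((if m = r then p s * (kdelta m m' - p m') * A m m' else 0)
                + (if m = r then (if m' = r then -(p s * p s) * A m m' else 0) else 0))) := by
        intro m' hm'
        rw [hq m hm, hq m' hm']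
        split_ifs <;> ring
      rw [Finset.sum_congr rfl e1]
      rw [Finset.sum_add_distrib, Finset.sum_add_distrib, Finset.sum_add_distrib]
      congr 1
      congr 1
      · rw [Finset.sum_ite_eq' E r (fun m' => -(p m * p s) * A m m'), if_pos hrE]
      congr 1
      · split_ifs with h
        · simp [h]
        · simp
      · split_ifs with h
        · rw [Finset.sum_ite_eq' E r (fun m' => -(p s * p s) * A m m'), if_pos hrE]
        · simp
    rw [Finset.sum_congr rfl step]
    rw [Finset.sum_add_distrib, Finset.sum_add_distrib, Finset.sum_add_distrib]
    congr 1
    congr 1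
    congr 1
    · rw [Finset.sum_ite_eq' E r _, if_pos hrE]
    · rw [Finset.sum_ite_eq' E r _, if_pos hrE]
  -- LHS decomposition
  have outer : ∀ (g : Fin n → ℝ), (∑ i, g i) = (∑ i ∈ E, g i) + g s := by
    intro g
    rw [← Finset.sum_erase_add Finset.univ g (Finset.mem_univ s)]
  have hL : (∑ i, ∑ j, p i * (kdelta i j - p j) *
        A (if i = s then r else i) (if j = s then r else j))
      = ((∑ m ∈ E, ∑ m' ∈ E, p m * (kdelta m m' - p m') * A m m')
          + (∑ m ∈ E, p m * (kdelta m s - p s) * A m r))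
        + ((∑ m' ∈ E, p s * (kdelta s m' - p m') * A r m')
          + p s * (kdelta s s - p s) * A r r) := by
    rw [outer]
    congr 1
    · have inner_i : ∀ i ∈ E, (∑ j, p i * (kdelta i j - p j) *
          A (if i = s then r else i) (if j = s then r else j))
          = (∑ m' ∈ E, p i * (kdelta i m' - p m') * A i m')
            + p i * (kdelta i s - p s) * A i r := by
        intro i hi
        have his : i ≠ s := (Finset.mem_erase.1 hi).1
        rw [outer]
        congr 1
        · apply Finset.sum_congr rfl
          intro j hj
          have hjs : j ≠ s := (Finset.mem_erase.1 hj).1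
          rw [if_neg his, if_neg hjs]
        · rw [if_neg his, if_pos rfl]
      rw [Finset.sum_congr rfl inner_i, Finset.sum_add_distrib]
    · rw [outer]
      congr 1
      · apply Finset.sum_congr rfl
        intro j hj
        have hjs : j ≠ s := (Finset.mem_erase.1 hj).1
        rw [if_pos rfl, if_neg hjs]
      · simp
  have hY : (∑ m ∈ E, p m * (kdelta m s - p s) * A m r)
      = ∑ m ∈ E, -(p m * p s) * A m r := by
    apply Finset.sum_congr rfl
    intro m hm
    have hms : m ≠ s := (Finset.mem_erase.1 hm).1
    have h0 : kdelta m s = 0 := by unfold kdelta; rw [if_neg hms]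
    rw [h0]; ring
  have hZW : (∑ m' ∈ E, p s * (kdelta s m' - p m') * A r m')
        + p s * (kdelta s s - p s) * A r r
      = (∑ m' ∈ E, p s * (kdelta r m' - p m') * A r m') + (-(p s * p s) * A r r) := by
    have e2 : ∀ m' ∈ E, p s * (kdelta r m' - p m') * A r m'
        = p s * (kdelta s m' - p m') * A r m' + (if m' = r then p s * A r m' else 0) := by
      intro m' hm'
      have hms : m' ≠ s := (Finset.mem_erase.1 hm').1
      have h1 : kdelta s m' = 0 := by unfold kdelta; rw [if_neg (fun h => hms h.symm)]
      rw [h1]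
      by_cases h : m' = r
      · subst h
        have h2 : kdelta m' m' = 1 := by unfold kdelta; rw [if_pos rfl]
        rw [h2, if_pos rfl]; ring
      · have h2 : kdelta r m' = 0 := by unfold kdelta; rw [if_neg (fun h' => h h'.symm)]
        rw [h2, if_neg h]; ring
    rw [Finset.sum_congr rfl e2, Finset.sum_add_distrib,
      Finset.sum_ite_eq' E r (fun m' => p s * A r m'), if_pos hrE]
    have h3 : kdelta s s = (1 : ℝ) := by unfold kdelta; rw [if_pos rfl]
    rw [h3]
    ring
  rw [hL, hR, hY]
  linarith [hZW]

theorem stmt6 (n : ℕ) (r s : Fin n) (hrs : r ≠ s) (κ : ℝ) (ψ : (Fin n → ℝ) → ℝ)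
    (V : Set (Fin n → ℝ)) (hV : IsOpen V)
    (hVsub : projRS r s '' stdSimplexO n ⊆ V)
    (hψ : ContDiffOn ℝ (⊤ : ℕ∞) ψ V)
    (heig : ∀ p ∈ stdSimplexO n,
      (1/2) * ∑ m ∈ Finset.univ.erase s, ∑ m' ∈ Finset.univ.erase s,
          (projRS r s p) m * (kdelta m m' - (projRS r s p) m') *
            pd2 ψ m m' (projRS r s p)
        = -κ * ψ (projRS r s p)) :
    ∀ p ∈ stdSimplexO n,
      Lb (fun q => ψ (projRS r s q)) p = -κ * ψ (projRS r s p) := by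
  classical
  set π := projCLM r s hrs with hπ
  have hπeq : ∀ x, π x = projRS r s x := fun x => rfl
  -- ψ is smooth at each point of V
  have hψat : ∀ y ∈ V, ContDiffAt ℝ (⊤ : ℕ∞) ψ y := fun y hy =>
    (hψ y hy).contDiffAt (hV.mem_nhds hy)
  -- first derivative of ψ ∘ π on π ⁻¹' V
  have hpd1 : ∀ i : Fin n, ∀ y : Fin n → ℝ, projRS r s y ∈ V →
      pd (fun q => ψ (projRS r s q)) i y
        = pd ψ (if i = s then r else i) (projRS r s y) := by
    intro i y hy
    have hdiff : DifferentiableAt ℝ ψ (π y) :=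
      (hψat _ hy).differentiableAt (by simp)
    have hc : (fun q => ψ (projRS r s q)) = ψ ∘ π := rfl
    have hfd : fderiv ℝ (ψ ∘ π) y = (fderiv ℝ ψ (π y)).comp π := by
      rw [fderiv_comp y hdiff π.differentiableAt, π.fderiv]
    rw [pd, hc, hfd]
    simp only [ContinuousLinearMap.coe_comp', Function.comp_apply]
    rw [hπeq (Pi.single i 1), projRS_single r s hrs i]
    rfl
  -- second derivative
  have hpd2 : ∀ (i j : Fin n), ∀ y : Fin n → ℝ, projRS r s y ∈ V →
      pd2 (fun q => ψ (projRS r s q)) i j y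
        = pd2 ψ (if i = s then r else i) (if j = s then r else j) (projRS r s y) := by
    intro i j y hy
    set m := if i = s then r else i with hm
    -- pd of ψ ∘ π eventually equals (pd ψ m) ∘ π near y
    have hopen : IsOpen (π ⁻¹' V) := hV.preimage π.continuous
    have hyin : y ∈ π ⁻¹' V := hy
    have hev : pd (fun q => ψ (projRS r s q)) i =ᶠ[nhds y]
        fun z => pd ψ m (projRS r s z) := by
      filter_upwards [hopen.mem_nhds hyin] with z hz
      exact hpd1 i z hz
    -- pd ψ m is differentiable at π y
    have hfd' : ContDiffAt ℝ (⊤ : ℕ∞) (fderiv ℝ ψ) (π y) :=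
      (hψat _ hy).fderiv_right (by simp)
    have hpdm : DifferentiableAt ℝ (pd ψ m) (π y) := by
      have : DifferentiableAt ℝ (fun z => fderiv ℝ ψ z (Pi.single m 1)) (π y) :=
        (hfd'.differentiableAt (by simp)).clm_apply (differentiableAt_const _)
      exact this
    have hcomp : fderiv ℝ (fun z => pd ψ m (projRS r s z)) y
        = (fderiv ℝ (pd ψ m) (π y)).comp π := by
      rw [show (fun z => pd ψ m (projRS r s z)) = (pd ψ m) ∘ π from rfl,
        fderiv_comp y hpdm π.differentiableAt, π.fderiv]
    rw [pd2, pd, hev.fderiv_eq, hcomp]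
    simp only [ContinuousLinearMap.coe_comp', Function.comp_apply]
    rw [hπeq (Pi.single j 1), projRS_single r s hrs j]
    rfl
  intro p hp
  have hpV : projRS r s p ∈ V := hVsub ⟨p, hp, rfl⟩
  rw [Lb]
  have : (∑ i, ∑ j, p i * (kdelta i j - p j) * pd2 (fun q => ψ (projRS r s q)) i j p)
      = ∑ i, ∑ j, p i * (kdelta i j - p j) *
          pd2 ψ (if i = s then r else i) (if j = s then r else j) (projRS r s p) := by
    apply Finset.sum_congr rfl
    intro i _
    apply Finset.sum_congr rfl
    intro j _
    rw [hpd2 i j p hpV]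
  rw [this, key_sum r s hrs p (fun m m' => pd2 ψ m m' (projRS r s p))]
  exact heig p hp
end
end

section
/- Let $r \ne s$ in $\{1,\dots,n\}$, $\pi^{r,s}$ the projection of the previous statement, $g(p) = \frac{p^r}{p^s+p^r}$, and let $\psi$ be smooth near $\pi^{r,s}(\Delta_n)$ with $L^*_{n-1}\psi = -\kappa\psi$ on the face $\{p^s = 0\}$ (in the restricted coordinates). Then the product $\bar\psi(p) := \psi(\pi^{r,s}(p))\, g(p)$ satisfies $L_n^* \bar\psi = -\kappa\, \bar\psi$ on $\Delta_n$. In particular, the cross-term $\sum_{i,j=1}^n p^i(\delta^i_j - p^j)\, \partial_{p^i}(\psi\circ\pi^{r,s})(p)\, \partial_{p^j} g(p)$ vanishes identically on $\Delta_n$. -/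
open scoped BigOperators

noncomputable section

namespace S7
variable {n : ℕ}


/-- the swap-to-face index map -/
def sg (r s i : Fin n) : Fin n := if i = s then r else i

lemma sum_kd (a : Fin n) (f : Fin n → ℝ) : ∑ i, kdelta a i * f i = f a := by
  have h : ∀ i, kdelta a i * f i = if a = i then f i else 0 := by
    intro i; by_cases h : a = i <;> simp [kdelta, h]
  simp only [h, Finset.sum_ite_eq, Finset.mem_univ, if_true]

lemma t1 (r s : Fin n) (c F : Fin n → ℝ) :
    ∑ j, c j * F (sg r s j) = (∑ j, c j * F j) + c s * F r - c s * F s := by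
  have h : ∀ j, c j * F (sg r s j)
      = c j * F j + (kdelta s j * (c s * F r) - kdelta s j * (c s * F s)) := by
    intro j; rcases eq_or_ne j s with h | h
    · subst h; simp [sg, kdelta]
    · simp [sg, h, kdelta, Ne.symm h]
  simp only [h]
  rw [Finset.sum_add_distrib, Finset.sum_sub_distrib, sum_kd, sum_kd]
  ring

lemma hq_eq (r s : Fin n) (hrs : r ≠ s) (p : Fin n → ℝ) (i : Fin n) :
    projRS r s p i = p i + (kdelta r i - kdelta s i) * p s := by
  rcases eq_or_ne i s with h | h
  · subst h; simp [projRS, kdelta, Ne.symm hrs, hrs]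
  · rcases eq_or_ne i r with h2 | h2
    · subst h2; simp [projRS, kdelta, h, Ne.symm h]; ring
    · simp [projRS, kdelta, Function.update_apply, h, h2, Ne.symm h, Ne.symm h2]



lemma expandDP (c : Fin n → ℝ) (G : Fin n → Fin n → ℝ) :
    ∑ i, ∑ j, c i * (kdelta i j - c j) * G i j
    = (∑ i, c i * G i i) - ∑ i, c i * ∑ j, c j * G i j := by
  rw [← Finset.sum_sub_distrib]
  apply Finset.sum_congr rfl; intro i _
  have h : ∀ j, c i * (kdelta i j - c j) * G i j
      = kdelta i j * (c i * G i j) - c i * (c j * G i j) := by intro j; ring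
  simp only [h]
  rw [Finset.sum_sub_distrib, sum_kd, ← Finset.mul_sum]

lemma ext_erase (r s : Fin n) (hrs : r ≠ s) (p : Fin n → ℝ) (F : Fin n → Fin n → ℝ) :
    ∑ m, ∑ m', projRS r s p m * (kdelta m m' - projRS r s p m') * F m m'
    = ∑ m ∈ Finset.univ.erase s, ∑ m' ∈ Finset.univ.erase s,
        projRS r s p m * (kdelta m m' - projRS r s p m') * F m m' := by
  set q := projRS r s p with hqdef
  have hqs : q s = 0 := by simp [hqdef, projRS]
  rw [← Finset.sum_erase_add Finset.univ _ (Finset.mem_univ s)]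
  have hrow : ∑ m', q s * (kdelta s m' - q m') * F s m' = 0 := by
    simp [hqs]
  rw [hrow, add_zero]
  apply Finset.sum_congr rfl
  intro m hm
  have hms : m ≠ s := Finset.ne_of_mem_erase hm
  rw [← Finset.sum_erase_add Finset.univ _ (Finset.mem_univ s)]
  have hz : q m * (kdelta m s - q s) * F m s = 0 := by
    simp [hqs, kdelta, hms]
  rw [hz, add_zero]

lemma reindex (r s : Fin n) (hrs : r ≠ s) (p : Fin n → ℝ) (F : Fin n → Fin n → ℝ) :
    ∑ i, ∑ j, p i * (kdelta i j - p j) * F (sg r s i) (sg r s j)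
    = ∑ m ∈ Finset.univ.erase s, ∑ m' ∈ Finset.univ.erase s,
        projRS r s p m * (kdelta m m' - projRS r s p m') * F m m' := by
  rw [← ext_erase r s hrs p F]
  set q := projRS r s p with hqdef
  have hq : ∀ i, q i = p i + (kdelta r i - kdelta s i) * p s := hq_eq r s hrs p
  set h : Fin n → ℝ := fun m => (∑ j, p j * F m j) + p s * F m r - p s * F m s with hh
  -- expand both sides
  rw [expandDP p (fun i j => F (sg r s i) (sg r s j)), expandDP q F]
  -- diagonal parts
  have hD : ∑ i, p i * F (sg r s i) (sg r s i) = ∑ i, q i * F i i := by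
    have := t1 r s p (fun m => F m m)
    rw [this]
    have h2 : ∀ i, q i * F i i
        = p i * F i i + (kdelta r i * (p s * F i i) - kdelta s i * (p s * F i i)) := by
      intro i; rw [hq i]; ring
    simp only [h2]
    rw [Finset.sum_add_distrib, Finset.sum_sub_distrib, sum_kd, sum_kd]
    ring
  -- inner sums
  have hinL : ∀ i, ∑ j, p j * F (sg r s i) (sg r s j) = h (sg r s i) := by
    intro i
    have := t1 r s p (F (sg r s i))
    rw [this]
  have hinR : ∀ i, ∑ j, q j * F i j = h i := by
    intro i
    have h2 : ∀ j, q j * F i j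
        = p j * F i j + (kdelta r j * (p s * F i j) - kdelta s j * (p s * F i j)) := by
      intro j; rw [hq j]; ring
    simp only [h2]
    rw [Finset.sum_add_distrib, Finset.sum_sub_distrib, sum_kd, sum_kd, hh]
    ring
  have hP : ∑ i, p i * ∑ j, p j * F (sg r s i) (sg r s j)
      = ∑ i, q i * ∑ j, q j * F i j := by
    simp only [hinL, hinR]
    rw [t1 r s p h]
    have h2 : ∀ i, q i * h i
        = p i * h i + (kdelta r i * (p s * h i) - kdelta s i * (p s * h i)) := by
      intro i; rw [hq i]; ring
    simp only [h2]
    rw [Finset.sum_add_distrib, Finset.sum_sub_distrib, sum_kd, sum_kd]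
    ring
  rw [hD, hP]



lemma cross_zero (r s : Fin n) (p : Fin n → ℝ) (Φ : Fin n → ℝ) (hΦ : Φ s = Φ r) :
    ∑ i, ∑ j, p i * (kdelta i j - p j) * Φ i *
      ((kdelta r j * p s - kdelta s j * p r) / (p s + p r)^2) = 0 := by
  set X : Fin n → ℝ := fun j => (kdelta r j * p s - kdelta s j * p r) / (p s + p r)^2 with hX
  have hre : ∀ i j, p i * (kdelta i j - p j) * Φ i * X j
      = p i * (kdelta i j - p j) * (Φ i * X j) := by intro i j; ring
  rw [show (∑ i, ∑ j, p i * (kdelta i j - p j) * Φ i *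
      ((kdelta r j * p s - kdelta s j * p r) / (p s + p r)^2))
      = ∑ i, ∑ j, p i * (kdelta i j - p j) * (Φ i * X j) from
    Finset.sum_congr rfl fun i _ => Finset.sum_congr rfl fun j _ => hre i j]
  rw [expandDP p (fun i j => Φ i * X j)]
  have h1 : ∑ j, p j * X j = 0 := by
    have h : ∀ j, p j * X j = kdelta r j * (p j * p s / (p s + p r)^2)
        - kdelta s j * (p j * p r / (p s + p r)^2) := by
      intro j; rw [hX]; ring
    simp only [h]
    rw [Finset.sum_sub_distrib, sum_kd, sum_kd]
    ring
  have h2 : ∑ i, p i * (Φ i * X i) = 0 := by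
    have h : ∀ i, p i * (Φ i * X i) = kdelta r i * (p i * Φ i * p s / (p s + p r)^2)
        - kdelta s i * (p i * Φ i * p r / (p s + p r)^2) := by
      intro i; rw [hX]; ring
    simp only [h]
    rw [Finset.sum_sub_distrib, sum_kd, sum_kd, hΦ]
    ring
  rw [h2]
  have h3 : ∀ i, p i * ∑ j, p j * (Φ i * X j) = 0 := by
    intro i
    have : ∀ j, p j * (Φ i * X j) = Φ i * (p j * X j) := by intro j; ring
    simp only [this]
    rw [← Finset.mul_sum, h1]
    ring
  simp only [h3, Finset.sum_const_zero, sub_zero]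

lemma g2sum_zero (r s : Fin n) (hrs : r ≠ s) (p : Fin n → ℝ) :
    ∑ i, ∑ j, p i * (kdelta i j - p j) *
      ((kdelta r i * kdelta r j * (-2 * p s)
        + (kdelta r i * kdelta s j + kdelta s i * kdelta r j) * (p r - p s)
        + kdelta s i * kdelta s j * (2 * p r)) / (p s + p r)^3) = 0 := by
  set G : Fin n → Fin n → ℝ := fun i j =>
    (kdelta r i * kdelta r j * (-2 * p s)
        + (kdelta r i * kdelta s j + kdelta s i * kdelta r j) * (p r - p s)
        + kdelta s i * kdelta s j * (2 * p r)) / (p s + p r)^3 with hG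
  rw [expandDP p G]
  have hdiag : ∀ i, p i * G i i = kdelta r i * (p i * (-2 * p s) / (p s + p r)^3)
      + kdelta s i * (p i * (2 * p r) / (p s + p r)^3) := by
    intro i
    rcases eq_or_ne i r with h | h
    · subst h; simp [hG, kdelta, hrs, Ne.symm hrs]; ring
    · rcases eq_or_ne i s with h2 | h2
      · subst h2; simp [hG, kdelta, hrs, Ne.symm hrs, h]; ring
      · simp [hG, kdelta, Ne.symm h, Ne.symm h2]
  have hD : ∑ i, p i * G i i = 0 := by
    simp only [hdiag]
    rw [Finset.sum_add_distrib, sum_kd, sum_kd]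
    ring
  have hinner : ∀ i, ∑ j, p j * G i j
      = p r * (kdelta r i * (-2 * p s) + kdelta s i * (p r - p s)) / (p s + p r)^3
        + p s * (kdelta r i * (p r - p s) + kdelta s i * (2 * p r)) / (p s + p r)^3 := by
    intro i
    have h : ∀ j, p j * G i j
        = kdelta r j * (p j * (kdelta r i * (-2 * p s) + kdelta s i * (p r - p s)) / (p s + p r)^3)
          + kdelta s j * (p j * (kdelta r i * (p r - p s) + kdelta s i * (2 * p r)) / (p s + p r)^3) := by
      intro j
      rcases eq_or_ne j r with h | h
      · subst h; simp [hG, kdelta, hrs, Ne.symm hrs]; ring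
      · rcases eq_or_ne j s with h2 | h2
        · subst h2; simp [hG, kdelta, hrs, Ne.symm hrs, h]; ring
        · simp [hG, kdelta, Ne.symm h, Ne.symm h2]
    simp only [h]
    rw [Finset.sum_add_distrib, sum_kd, sum_kd]
  have hP : ∑ i, p i * ∑ j, p j * G i j = 0 := by
    simp only [hinner]
    have h : ∀ i, p i * (p r * (kdelta r i * (-2 * p s) + kdelta s i * (p r - p s)) / (p s + p r)^3
        + p s * (kdelta r i * (p r - p s) + kdelta s i * (2 * p r)) / (p s + p r)^3)
        = kdelta r i * (p i * (p r * (-2*p s) + p s * (p r - p s)) / (p s + p r)^3)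
          + kdelta s i * (p i * (p r * (p r - p s) + p s * (2 * p r)) / (p s + p r)^3) := by
      intro i; ring
    simp only [h]
    rw [Finset.sum_add_distrib, sum_kd, sum_kd]
    ring
  rw [hD, hP]
  ring

lemma coeff_symm (p : Fin n → ℝ) (i j : Fin n) :
    p i * (kdelta i j - p j) = p j * (kdelta j i - p i) := by
  rcases eq_or_ne i j with h | h
  · subst h; ring
  · simp [kdelta, h, Ne.symm h]; ring



abbrev Pr (r : Fin n) : (Fin n → ℝ) →L[ℝ] ℝ := ContinuousLinearMap.proj r

lemma single_eval (i j : Fin n) : (Pi.single j (1:ℝ) : Fin n → ℝ) i = kdelta i j := by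
  simp [Pi.single_apply, kdelta]

lemma hv_fd (r s : Fin n) (q : Fin n → ℝ) :
    HasFDerivAt (fun x : Fin n → ℝ => x s + x r) (Pr s + Pr r) q :=
  (Pr s).hasFDerivAt.add (Pr r).hasFDerivAt

lemma hw_fd (r s : Fin n) (q : Fin n → ℝ) (hv : q s + q r ≠ 0) :
    HasFDerivAt (fun x : Fin n → ℝ => (x s + x r)⁻¹)
      ((-((q s + q r)^2)⁻¹) • (Pr s + Pr r)) q :=
  (hasDerivAt_inv hv).comp_hasFDerivAt q (hv_fd r s q)

lemma hg_fd (r s : Fin n) (q : Fin n → ℝ) (hv : q s + q r ≠ 0) :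
    HasFDerivAt (fun x : Fin n → ℝ => x r / (x s + x r))
      ((q r) • ((-((q s + q r)^2)⁻¹) • (Pr s + Pr r)) + ((q s + q r)⁻¹) • Pr r) q := by
  have h := (Pr (n := n) r).hasFDerivAt.mul (hw_fd r s q hv)
  have hfun : (fun x : Fin n → ℝ => x r / (x s + x r))
      = fun x : Fin n → ℝ => (Pr (n := n) r) x * (x s + x r)⁻¹ := by
    funext x; rw [div_eq_mul_inv]; rfl
  rw [hfun]
  exact h

lemma pd_g (r s : Fin n) (q : Fin n → ℝ) (hv : q s + q r ≠ 0) (j : Fin n) :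
    pd (fun x : Fin n → ℝ => x r / (x s + x r)) j q
      = (kdelta r j * q s - kdelta s j * q r) / (q s + q r)^2 := by
  unfold pd
  rw [(hg_fd r s q hv).fderiv]
  simp only [ContinuousLinearMap.add_apply, ContinuousLinearMap.coe_smul',
    Pi.smul_apply, ContinuousLinearMap.proj_apply, single_eval, smul_eq_mul]
  field_simp
  ring

/-- representative of the first partials of g -/
def G1 (r s i : Fin n) (x : Fin n → ℝ) : ℝ :=
  (kdelta r i * x s - kdelta s i * x r) / (x s + x r)^2

lemma hG1_fd (r s i : Fin n) (q : Fin n → ℝ) (hv : q s + q r ≠ 0) :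
    HasFDerivAt (G1 r s i)
      ((kdelta r i * q s - kdelta s i * q r) •
          ((-((2:ℕ) * (q s + q r)^1) / ((q s + q r)^2)^2) • (Pr s + Pr r))
        + (((q s + q r)^2)⁻¹) • ((kdelta r i) • (Pr s : (Fin n → ℝ) →L[ℝ] ℝ)
            - (kdelta s i) • (Pr r : (Fin n → ℝ) →L[ℝ] ℝ))) q := by
  have hnum : HasFDerivAt (fun x : Fin n → ℝ => kdelta r i * x s - kdelta s i * x r)
      ((kdelta r i) • (Pr s : (Fin n → ℝ) →L[ℝ] ℝ) - (kdelta s i) • (Pr r : (Fin n → ℝ) →L[ℝ] ℝ)) q :=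
    ((Pr s).hasFDerivAt.const_mul (kdelta r i)).sub ((Pr r).hasFDerivAt.const_mul (kdelta s i))
  have hpow : HasDerivAt (fun y : ℝ => (y^2)⁻¹)
      (-((2:ℕ) * (q s + q r)^1) / ((q s + q r)^2)^2) (q s + q r) :=
    (hasDerivAt_pow 2 (q s + q r)).inv (pow_ne_zero 2 hv)
  have hh2 : HasFDerivAt (fun x : Fin n → ℝ => ((x s + x r)^2)⁻¹)
      ((-((2:ℕ) * (q s + q r)^1) / ((q s + q r)^2)^2) • (Pr s + Pr r)) q :=
    by have := hpow.comp_hasFDerivAt q (hv_fd r s q); exact this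
  have h := hnum.mul hh2
  have hfun : G1 r s i = fun x : Fin n → ℝ =>
      (kdelta r i * x s - kdelta s i * x r) * ((x s + x r)^2)⁻¹ := by
    funext x; rw [G1, div_eq_mul_inv]
  rw [hfun]
  exact h

lemma pd_G1 (r s : Fin n) (hrs : r ≠ s) (i : Fin n) (q : Fin n → ℝ) (hv : q s + q r ≠ 0)
    (j : Fin n) :
    pd (G1 r s i) j q
      = (kdelta r i * kdelta r j * (-2 * q s)
        + (kdelta r i * kdelta s j + kdelta s i * kdelta r j) * (q r - q s)
        + kdelta s i * kdelta s j * (2 * q r)) / (q s + q r)^3 := by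
  unfold pd
  rw [(hG1_fd r s i q hv).fderiv]
  simp only [ContinuousLinearMap.add_apply, ContinuousLinearMap.coe_smul',
    Pi.smul_apply, ContinuousLinearMap.coe_sub', Pi.sub_apply,
    ContinuousLinearMap.proj_apply, single_eval, smul_eq_mul]
  field_simp
  ring

lemma W_open (r s : Fin n) : IsOpen {x : Fin n → ℝ | x s + x r ≠ 0} := by
  have : Continuous fun x : Fin n → ℝ => x s + x r :=
    (continuous_apply s).add (continuous_apply r)
  exact this.isOpen_preimage _ isOpen_compl_singleton

lemma pd_g_eventually (r s : Fin n) (i : Fin n) (q : Fin n → ℝ) (hv : q s + q r ≠ 0) :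
    pd (fun x : Fin n → ℝ => x r / (x s + x r)) i =ᶠ[nhds q] G1 r s i :=
  Filter.eventuallyEq_of_mem ((W_open r s).mem_nhds hv) (fun x hx => pd_g r s x hx i)

lemma pd2_g (r s : Fin n) (hrs : r ≠ s) (q : Fin n → ℝ) (hv : q s + q r ≠ 0) (i j : Fin n) :
    pd2 (fun x : Fin n → ℝ => x r / (x s + x r)) i j q
      = (kdelta r i * kdelta r j * (-2 * q s)
        + (kdelta r i * kdelta s j + kdelta s i * kdelta r j) * (q r - q s)
        + kdelta s i * kdelta s j * (2 * q r)) / (q s + q r)^3 := by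
  have heq : pd (fun x : Fin n → ℝ => x r / (x s + x r)) i =ᶠ[nhds q] G1 r s i :=
    pd_g_eventually r s i q hv
  unfold pd2
  have h2 : pd (pd (fun x : Fin n → ℝ => x r / (x s + x r)) i) j q
      = pd (G1 r s i) j q := by
    unfold pd
    congr 1
    exact heq.fderiv_eq
  rw [h2]
  exact pd_G1 r s hrs i q hv j



def Amap (r s : Fin n) : (Fin n → ℝ) →L[ℝ] (Fin n → ℝ) :=
  ContinuousLinearMap.pi (fun i => if i = s then 0 else if i = r then Pr s + Pr r else Pr i)

lemma Amap_apply (r s : Fin n) (p : Fin n → ℝ) : Amap r s p = projRS r s p := by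
  funext i
  rcases eq_or_ne i s with h | h
  · subst h; simp [Amap, projRS]
  · rcases eq_or_ne i r with h2 | h2
    · subst h2; simp [Amap, projRS, h, Function.update_apply]
    · simp [Amap, projRS, h, h2, Function.update_apply]

lemma Amap_single (r s : Fin n) (hrs : r ≠ s) (i : Fin n) :
    Amap r s (Pi.single i 1) = Pi.single (sg r s i) 1 := by
  funext k
  simp only [Amap, ContinuousLinearMap.pi_apply]
  by_cases hks : k = s <;> by_cases hkr : k = r <;> by_cases his : i = s <;>
    by_cases hir : i = r <;>
    simp_all [sg, Pi.single_apply, ContinuousLinearMap.add_apply,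
      ContinuousLinearMap.proj_apply, apply_ite] <;>
    first
    | rfl
    | (try simp_all) <;> (try omega) <;> (try tauto)

variable {ψ : (Fin n → ℝ) → ℝ} {V : Set (Fin n → ℝ)}

lemma diff_psi (hV : IsOpen V) (hψ : ContDiffOn ℝ (⊤ : ℕ∞) ψ V) {y : Fin n → ℝ} (hy : y ∈ V) :
    DifferentiableAt ℝ ψ y :=
  (hψ.differentiableOn (by simp)).differentiableAt (hV.mem_nhds hy)

lemma contDiffOn_pdpsi (hV : IsOpen V) (hψ : ContDiffOn ℝ (⊤ : ℕ∞) ψ V) (m : Fin n) :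
    ContDiffOn ℝ (⊤ : ℕ∞) (pd ψ m) V :=
  (hψ.fderiv_of_isOpen hV (by simp)).clm_apply contDiffOn_const

lemma diff_pdpsi (hV : IsOpen V) (hψ : ContDiffOn ℝ (⊤ : ℕ∞) ψ V) (m : Fin n) {y : Fin n → ℝ}
    (hy : y ∈ V) : DifferentiableAt ℝ (pd ψ m) y :=
  ((contDiffOn_pdpsi hV hψ m).differentiableOn (by simp)).differentiableAt (hV.mem_nhds hy)

lemma diff_psiA (r s : Fin n) (hV : IsOpen V) (hψ : ContDiffOn ℝ (⊤ : ℕ∞) ψ V)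
    {q : Fin n → ℝ} (hq : Amap r s q ∈ V) :
    DifferentiableAt ℝ (fun x => ψ (Amap r s x)) q :=
  (diff_psi hV hψ hq).comp q (Amap r s).differentiableAt

lemma pd_psiA (r s : Fin n) (hrs : r ≠ s) (hV : IsOpen V) (hψ : ContDiffOn ℝ (⊤ : ℕ∞) ψ V)
    {q : Fin n → ℝ} (hq : Amap r s q ∈ V) (j : Fin n) :
    pd (fun x => ψ (Amap r s x)) j q = pd ψ (sg r s j) (Amap r s q) := by
  unfold pd
  rw [show (fun x => ψ (Amap r s x)) = ψ ∘ (Amap r s) from rfl,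
    fderiv_comp q (diff_psi hV hψ hq) (Amap r s).differentiableAt,
    ContinuousLinearMap.fderiv, ContinuousLinearMap.comp_apply, Amap_single r s hrs j]

lemma diff_pdpsiA (r s : Fin n) (hV : IsOpen V) (hψ : ContDiffOn ℝ (⊤ : ℕ∞) ψ V) (m : Fin n)
    {q : Fin n → ℝ} (hq : Amap r s q ∈ V) :
    DifferentiableAt ℝ (fun x => pd ψ m (Amap r s x)) q :=
  (diff_pdpsi hV hψ m hq).comp q (Amap r s).differentiableAt

lemma pd_pdpsiA (r s : Fin n) (hrs : r ≠ s) (hV : IsOpen V) (hψ : ContDiffOn ℝ (⊤ : ℕ∞) ψ V)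
    (m : Fin n) {q : Fin n → ℝ} (hq : Amap r s q ∈ V) (j : Fin n) :
    pd (fun x => pd ψ m (Amap r s x)) j q = pd2 ψ m (sg r s j) (Amap r s q) := by
  have h : fderiv ℝ (fun x => pd ψ m (Amap r s x)) q
      = (fderiv ℝ (pd ψ m) (Amap r s q)).comp (Amap r s) := by
    rw [show (fun x => pd ψ m (Amap r s x)) = (pd ψ m) ∘ (Amap r s) from rfl,
      fderiv_comp q (diff_pdpsi hV hψ m hq) (Amap r s).differentiableAt,
      ContinuousLinearMap.fderiv]
  show (fderiv ℝ (fun x => pd ψ m (Amap r s x)) q) (Pi.single j 1) = _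
  rw [h, ContinuousLinearMap.comp_apply, Amap_single r s hrs j]
  rfl


lemma pd_add {c d : (Fin n → ℝ) → ℝ} {q : Fin n → ℝ} (hc : DifferentiableAt ℝ c q)
    (hd : DifferentiableAt ℝ d q) (i : Fin n) :
    pd (fun x => c x + d x) i q = pd c i q + pd d i q := by
  unfold pd
  rw [fderiv_fun_add hc hd]
  simp

lemma pd_prod {c d : (Fin n → ℝ) → ℝ} {q : Fin n → ℝ} (hc : DifferentiableAt ℝ c q)
    (hd : DifferentiableAt ℝ d q) (i : Fin n) :
    pd (fun x => c x * d x) i q = c q * pd d i q + d q * pd c i q := by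
  unfold pd
  rw [fderiv_fun_mul hc hd]
  simp

lemma pd2_F (r s : Fin n) (hrs : r ≠ s) (hV : IsOpen V) (hψ : ContDiffOn ℝ (⊤ : ℕ∞) ψ V)
    {q : Fin n → ℝ} (hqV : Amap r s q ∈ V) (hv : q s + q r ≠ 0) (i j : Fin n) :
    pd2 (fun x => ψ (projRS r s x) * (x r / (x s + x r))) i j q
      = pd2 ψ (sg r s i) (sg r s j) (Amap r s q) * (q r / (q s + q r))
        + pd ψ (sg r s i) (Amap r s q) * ((kdelta r j * q s - kdelta s j * q r) / (q s + q r)^2)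
        + pd ψ (sg r s j) (Amap r s q) * ((kdelta r i * q s - kdelta s i * q r) / (q s + q r)^2)
        + ψ (Amap r s q) *
          ((kdelta r i * kdelta r j * (-2 * q s)
            + (kdelta r i * kdelta s j + kdelta s i * kdelta r j) * (q r - q s)
            + kdelta s i * kdelta s j * (2 * q r)) / (q s + q r)^3) := by
  have hFeq : (fun x => ψ (projRS r s x) * (x r / (x s + x r)))
      = fun x => ψ (Amap r s x) * (x r / (x s + x r)) := by
    funext x; rw [Amap_apply]
  rw [hFeq]
  have hU : IsOpen ((Amap r s) ⁻¹' V ∩ {x : Fin n → ℝ | x s + x r ≠ 0}) :=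
    (hV.preimage (Amap r s).continuous).inter (W_open r s)
  have hqU : q ∈ (Amap r s) ⁻¹' V ∩ {x : Fin n → ℝ | x s + x r ≠ 0} := ⟨hqV, hv⟩
  have hrep : pd (fun x => ψ (Amap r s x) * (x r / (x s + x r))) i =ᶠ[nhds q]
      fun x => ψ (Amap r s x) * G1 r s i x
        + (x r / (x s + x r)) * pd ψ (sg r s i) (Amap r s x) := by
    apply Filter.eventuallyEq_of_mem (hU.mem_nhds hqU)
    rintro x ⟨hx1, hx2⟩
    rw [pd_prod (diff_psiA r s hV hψ hx1) (hg_fd r s x hx2).differentiableAt i,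
      show pd (fun y : Fin n → ℝ => y r / (y s + y r)) i x = G1 r s i x from pd_g r s x hx2 i,
      pd_psiA r s hrs hV hψ hx1 i]
  unfold pd2
  have h2 : pd (pd (fun x => ψ (Amap r s x) * (x r / (x s + x r))) i) j q
      = pd (fun x => ψ (Amap r s x) * G1 r s i x
          + (x r / (x s + x r)) * pd ψ (sg r s i) (Amap r s x)) j q := by
    unfold pd
    congr 1
    exact hrep.fderiv_eq
  rw [h2]
  have hT1 : DifferentiableAt ℝ (fun x => ψ (Amap r s x) * G1 r s i x) q :=
    (diff_psiA r s hV hψ hqV).mul (hG1_fd r s i q hv).differentiableAt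
  have hT2 : DifferentiableAt ℝ
      (fun x => (x r / (x s + x r)) * pd ψ (sg r s i) (Amap r s x)) q :=
    (hg_fd r s q hv).differentiableAt.mul (diff_pdpsiA r s hV hψ (sg r s i) hqV)
  rw [pd_add hT1 hT2 j,
    pd_prod (diff_psiA r s hV hψ hqV) (hG1_fd r s i q hv).differentiableAt j,
    pd_prod (hg_fd r s q hv).differentiableAt (diff_pdpsiA r s hV hψ (sg r s i) hqV) j,
    pd_psiA r s hrs hV hψ hqV j, pd_pdpsiA r s hrs hV hψ (sg r s i) hqV j,
    pd_G1 r s hrs i q hv j,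
    show pd (fun y : Fin n → ℝ => y r / (y s + y r)) j q = _ from pd_g r s q hv j]
  simp only [G1, pd2]
  ring


end S7

/-- Extension of an eigenfunction by linear interpolation: the product
`ψ(π^{r,s}(p)) ⋅ p^r/(p^s+p^r)` is again an eigenfunction, and the cross-term vanishes. -/
theorem stmt7 (n : ℕ) (r s : Fin n) (hrs : r ≠ s) (κ : ℝ) (ψ : (Fin n → ℝ) → ℝ)
    (V : Set (Fin n → ℝ)) (hV : IsOpen V)
    (hVsub : projRS r s '' stdSimplexO n ⊆ V)
    (hψ : ContDiffOn ℝ (⊤ : ℕ∞) ψ V)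
    (heig : ∀ p ∈ stdSimplexO n,
      (1/2) * ∑ m ∈ Finset.univ.erase s, ∑ m' ∈ Finset.univ.erase s,
          (projRS r s p) m * (kdelta m m' - (projRS r s p) m') *
            pd2 ψ m m' (projRS r s p)
        = -κ * ψ (projRS r s p)) :
    ∀ p ∈ stdSimplexO n,
      (Lb (fun q => ψ (projRS r s q) * (q r / (q s + q r))) p
          = -κ * (ψ (projRS r s p) * (p r / (p s + p r)))) ∧
      (∑ i, ∑ j, p i * (kdelta i j - p j) *
          pd (fun q => ψ (projRS r s q)) i p *
          pd (fun q => q r / (q s + q r)) j p = 0) := by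
  intro p hp
  have hv : p s + p r ≠ 0 := (add_pos (hp.1 s) (hp.1 r)).ne'
  have hqV : S7.Amap r s p ∈ V := by
    rw [S7.Amap_apply]; exact hVsub ⟨p, hp, rfl⟩
  have hΦ : pd ψ (S7.sg r s s) (projRS r s p) = pd ψ (S7.sg r s r) (projRS r s p) := by
    simp [S7.sg, hrs]
  have hcross : ∑ i, ∑ j, p i * (kdelta i j - p j)
      * pd ψ (S7.sg r s i) (projRS r s p)
      * ((kdelta r j * p s - kdelta s j * p r) / (p s + p r)^2) = 0 :=
    S7.cross_zero r s p (fun i => pd ψ (S7.sg r s i) (projRS r s p)) hΦ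
  refine ⟨?_, ?_⟩
  · unfold Lb
    have hpt : ∀ i j, p i * (kdelta i j - p j) *
        pd2 (fun q => ψ (projRS r s q) * (q r / (q s + q r))) i j p
      = p i * (kdelta i j - p j) * pd2 ψ (S7.sg r s i) (S7.sg r s j) (projRS r s p)
          * (p r / (p s + p r))
        + p i * (kdelta i j - p j) * pd ψ (S7.sg r s i) (projRS r s p)
          * ((kdelta r j * p s - kdelta s j * p r) / (p s + p r)^2)
        + p i * (kdelta i j - p j) * pd ψ (S7.sg r s j) (projRS r s p)
          * ((kdelta r i * p s - kdelta s i * p r) / (p s + p r)^2)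
        + p i * (kdelta i j - p j) *
            ((kdelta r i * kdelta r j * (-2 * p s)
              + (kdelta r i * kdelta s j + kdelta s i * kdelta r j) * (p r - p s)
              + kdelta s i * kdelta s j * (2 * p r)) / (p s + p r)^3) * ψ (projRS r s p) := by
      intro i j
      rw [S7.pd2_F r s hrs hV hψ hqV hv i j, S7.Amap_apply]
      ring
    simp only [hpt, Finset.sum_add_distrib]
    have h1 : ∑ i, ∑ j, p i * (kdelta i j - p j)
          * pd2 ψ (S7.sg r s i) (S7.sg r s j) (projRS r s p) * (p r / (p s + p r))
        = (∑ m ∈ Finset.univ.erase s, ∑ m' ∈ Finset.univ.erase s,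
            projRS r s p m * (kdelta m m' - projRS r s p m') * pd2 ψ m m' (projRS r s p))
          * (p r / (p s + p r)) := by
      simp only [← Finset.sum_mul]
      rw [S7.reindex r s hrs p (fun m m' => pd2 ψ m m' (projRS r s p))]
    have h3 : ∑ i, ∑ j, p i * (kdelta i j - p j) * pd ψ (S7.sg r s j) (projRS r s p)
          * ((kdelta r i * p s - kdelta s i * p r) / (p s + p r)^2) = 0 := by
      rw [Finset.sum_comm]
      rw [show (∑ j, ∑ i, p i * (kdelta i j - p j) * pd ψ (S7.sg r s j) (projRS r s p)
          * ((kdelta r i * p s - kdelta s i * p r) / (p s + p r)^2))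
        = ∑ j, ∑ i, p j * (kdelta j i - p i) * pd ψ (S7.sg r s j) (projRS r s p)
          * ((kdelta r i * p s - kdelta s i * p r) / (p s + p r)^2) from
        Finset.sum_congr rfl fun j _ => Finset.sum_congr rfl fun i _ => by
          rw [S7.coeff_symm p i j]]
      exact S7.cross_zero r s p (fun j => pd ψ (S7.sg r s j) (projRS r s p)) hΦ
    have h4 : ∑ i, ∑ j, p i * (kdelta i j - p j) *
            ((kdelta r i * kdelta r j * (-2 * p s)
              + (kdelta r i * kdelta s j + kdelta s i * kdelta r j) * (p r - p s)
              + kdelta s i * kdelta s j * (2 * p r)) / (p s + p r)^3) * ψ (projRS r s p)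
        = 0 := by
      simp only [← Finset.sum_mul]
      rw [S7.g2sum_zero r s hrs p]
      ring
    rw [h1, hcross, h3, h4]
    have hE := heig p hp
    linear_combination (p r / (p s + p r)) * hE
  · have hpdφ : ∀ i, pd (fun q => ψ (projRS r s q)) i p
        = pd ψ (S7.sg r s i) (projRS r s p) := by
      intro i
      rw [show (fun q => ψ (projRS r s q)) = fun x => ψ (S7.Amap r s x) from
        funext fun x => by rw [S7.Amap_apply]]
      rw [S7.pd_psiA r s hrs hV hψ hqV i, S7.Amap_apply]
    have hpdg : ∀ j, pd (fun q : Fin n → ℝ => q r / (q s + q r)) j p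
        = (kdelta r j * p s - kdelta s j * p r) / (p s + p r)^2 := fun j =>
      S7.pd_g r s p hv j
    simp only [hpdφ, hpdg]
    exact hcross
end
end

section
/- (Littler's formula is harmonic for the Wright-Fisher backward operator.) Let $i_0, i_1, \dots, i_{n-1}$ be distinct indices in $\{0,1,\dots,n\}$ and for $p \in \Delta_n$ (with $p^0 := 1 - \sum_{l=1}^n p^l$) define $u(p) = p^{i_0} \cdot \frac{p^{i_1}}{1 - p^{i_0}} \cdot \frac{p^{i_2}}{1 - p^{i_0} - p^{i_1}} \cdots \frac{p^{i_{n-1}}}{1 - \sum_{l=0}^{n-2} p^{i_l}}$. Then $L_n^* u = \frac{1}{2}\sum_{i,j=1}^n p^i(\delta^i_j - p^j)\partial_{p^i}\partial_{p^j} u = 0$ on $\Delta_n$. -/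
open scoped BigOperators

noncomputable section

/-- Extended coordinates on the simplex: `coordExt p 0 = p^0 = 1 - ∑ p^i`,
`coordExt p (i+1) = p^(i+1)`. -/
def coordExt {n : ℕ} (p : Fin n → ℝ) : Fin (n + 1) → ℝ :=
  Fin.cons (1 - ∑ i, p i) p

/-!
Write `x = coordExt p` for the `n + 1` allele frequencies and `mass s = ∑_{a ∈ s} x_a`. Littler's
function is `u = ∏ⱼ fⱼ / gⱼ` with `fⱼ = mass {i_j}` and `gⱼ = mass {i_l | l < j}ᶜ`, a ratio of
affine functions of `p`. Hence `∂ᵢ∂ₖ u = u (Aᵢ Aₖ + ∂ᵢ∂ₖ log u)` with `A = ∇ log u = ∑ⱼ vⱼ`,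
`vⱼ = ∇fⱼ / fⱼ - ∇gⱼ / gⱼ`, and `L* u = 0` becomes an identity for the diffusion form
`Γ(c, d) = ∑ pⁱ (δⁱⱼ - pʲ) cᵢ dⱼ`. On gradients of masses `Γ` is the multinomial covariance,
`Γ(∇ mass s, ∇ mass t) = mass (s ∩ t) - mass s * mass t`. With it the `vⱼ` are `Γ`-orthogonal,
and `Γ(vⱼ, vⱼ)` cancels the contribution `Γ(∇fⱼ, ∇fⱼ) / fⱼ² - Γ(∇gⱼ, ∇gⱼ) / gⱼ²` of `∂ᵢ∂ₖ log u`.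
-/

theorem hasFDerivAt_finsetProd_of_logDeriv {𝕜 E ι : Type*} [NontriviallyNormedField 𝕜]
    [NormedAddCommGroup E] [NormedSpace 𝕜 E] {s : Finset ι} {φ : ι → E → 𝕜}
    {L : ι → E →L[𝕜] 𝕜} {x : E} (h : ∀ j ∈ s, HasFDerivAt (φ j) (φ j x • L j) x) :
    HasFDerivAt (fun y => ∏ j ∈ s, φ j y) ((∏ j ∈ s, φ j x) • ∑ j ∈ s, L j) x := by
  classical
  refine (HasFDerivAt.finsetProd h).congr_fderiv ?_
  rw [Finset.smul_sum]
  refine Finset.sum_congr rfl fun j hj => ?_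
  rw [smul_smul, Finset.prod_erase_mul _ _ hj]

namespace Littler

variable {n : ℕ}

def dotCLM (c : Fin n → ℝ) : (Fin n → ℝ) →L[ℝ] ℝ :=
  LinearMap.toContinuousLinearMap (dotProductBilin ℝ ℝ c)

@[simp]
lemma dotCLM_apply (c v : Fin n → ℝ) : dotCLM c v = c ⬝ᵥ v := rfl

def wfForm (p : Fin n → ℝ) : LinearMap.BilinForm ℝ (Fin n → ℝ) :=
  Matrix.toBilin' (Matrix.of fun i k => p i * (kdelta i k - p k))

lemma wfForm_apply (p c d : Fin n → ℝ) :
    wfForm p c d = ∑ i, ∑ k, p i * (kdelta i k - p k) * (c i * d k) := by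
  simp only [wfForm, Matrix.toBilin'_apply, Matrix.of_apply]
  exact Finset.sum_congr rfl fun _ _ => Finset.sum_congr rfl fun _ _ => by ring

lemma wfForm_eq_cov (p c d : Fin n → ℝ) :
    wfForm p c d = ∑ i, p i * (c i * d i) - (∑ i, p i * c i) * ∑ i, p i * d i := by
  simp only [wfForm_apply, kdelta, mul_sub, sub_mul, Finset.sum_sub_distrib, mul_ite, mul_one,
    mul_zero, ite_mul, zero_mul, Finset.sum_ite_eq, Finset.mem_univ, if_true]
  rw [Finset.sum_mul_sum]
  congr 1
  exact Finset.sum_congr rfl fun _ _ => Finset.sum_congr rfl fun _ _ => by ring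

lemma wfForm_comm (p c d : Fin n → ℝ) : wfForm p c d = wfForm p d c := by
  simp only [wfForm_eq_cov, mul_comm (c _), mul_comm (∑ i, p i * c i)]

section AffineRatio

variable {ι : Type*} [Fintype ι] (f g : ι → (Fin n → ℝ) → ℝ) (a b : ι → Fin n → ℝ)

def logGrad (q : Fin n → ℝ) : Fin n → ℝ := ∑ j, ((f j q)⁻¹ • a j - (g j q)⁻¹ • b j)

def logHess (q : Fin n → ℝ) (i k : Fin n) : ℝ :=
  ∑ j, (b j i * b j k / g j q ^ 2 - a j i * a j k / f j q ^ 2)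

variable {f g a b}

lemma hasFDerivAt_div_of_dotCLM {f g : (Fin n → ℝ) → ℝ} {a b q : Fin n → ℝ}
    (hf : HasFDerivAt f (dotCLM a) q) (hg : HasFDerivAt g (dotCLM b) q)
    (hfq : f q ≠ 0) (hgq : g q ≠ 0) :
    HasFDerivAt (fun q => f q / g q) ((f q / g q) • dotCLM ((f q)⁻¹ • a - (g q)⁻¹ • b)) q := by
  have hinv := (hasDerivAt_inv hgq).comp_hasFDerivAt q hg
  refine (hf.mul hinv).congr_fderiv ?_
  ext v
  simp only [neg_smul, smul_neg, Function.comp_apply, add_apply, neg_apply, smul_apply,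
    dotCLM_apply, smul_eq_mul, sub_dotProduct, smul_dotProduct]
  field_simp
  ring

lemma hasFDerivAt_inv_of_dotCLM {f : (Fin n → ℝ) → ℝ} {a q : Fin n → ℝ}
    (hf : HasFDerivAt f (dotCLM a) q) (hfq : f q ≠ 0) :
    HasFDerivAt (fun q => (f q)⁻¹) (dotCLM (-(f q ^ 2)⁻¹ • a)) q := by
  refine ((hasDerivAt_inv hfq).comp_hasFDerivAt q hf).congr_fderiv ?_
  ext v
  simp [smul_dotProduct]

variable (hf : ∀ j q, HasFDerivAt (f j) (dotCLM (a j)) q)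
  (hg : ∀ j q, HasFDerivAt (g j) (dotCLM (b j)) q)
include hf hg

lemma hasFDerivAt_prod_div {q : Fin n → ℝ} (hfq : ∀ j, f j q ≠ 0) (hgq : ∀ j, g j q ≠ 0) :
    HasFDerivAt (fun q => ∏ j, f j q / g j q)
      ((∏ j, f j q / g j q) • dotCLM (logGrad f g a b q)) q := by
  refine (hasFDerivAt_finsetProd_of_logDeriv fun j _ =>
    hasFDerivAt_div_of_dotCLM (hf j q) (hg j q) (hfq j) (hgq j)).congr_fderiv ?_
  ext v
  simp [logGrad, sum_dotProduct]

lemma hasFDerivAt_logGrad_apply {q : Fin n → ℝ} (hfq : ∀ j, f j q ≠ 0) (hgq : ∀ j, g j q ≠ 0)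
    (i : Fin n) :
    HasFDerivAt (fun q => logGrad f g a b q i) (dotCLM (logHess f g a b q i)) q := by
  have hfun : (fun q => logGrad f g a b q i)
      = fun q => ∑ j, ((f j q)⁻¹ * a j i - (g j q)⁻¹ * b j i) := by
    ext q
    simp [logGrad, Finset.sum_apply]
  rw [hfun]
  refine (HasFDerivAt.fun_sum fun j _ =>
    ((hasFDerivAt_inv_of_dotCLM (hf j q) (hfq j)).mul_const (a j i)).sub
      ((hasFDerivAt_inv_of_dotCLM (hg j q) (hgq j)).mul_const (b j i))).congr_fderiv ?_
  ext v
  simp only [neg_smul, Finset.sum_sub_distrib, sub_apply, sum_apply, smul_apply, dotCLM_apply,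
    dotProduct, Pi.neg_apply, Pi.smul_apply, smul_eq_mul, neg_mul, Finset.sum_neg_distrib, mul_neg,
    Finset.mul_sum, sub_neg_eq_add, logHess, sub_mul, Finset.sum_mul, neg_add_eq_sub]
  congr 1 <;>
  · rw [Finset.sum_comm]
    exact Finset.sum_congr rfl fun _ _ => Finset.sum_congr rfl fun _ _ => by ring

lemma pd2_prod_div {p : Fin n → ℝ} (hfp : ∀ j, f j p ≠ 0) (hgp : ∀ j, g j p ≠ 0) (i k : Fin n) :
    pd2 (fun q => ∏ j, f j q / g j q) i k p
      = (∏ j, f j p / g j p) * (logGrad f g a b p i * logGrad f g a b p k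
          + logHess f g a b p i k) := by
  have hnear : ∀ᶠ q in nhds p, (∀ j, f j q ≠ 0) ∧ ∀ j, g j q ≠ 0 :=
    (Filter.eventually_all.2 fun j => (hf j p).continuousAt.eventually_ne (hfp j)).and
      (Filter.eventually_all.2 fun j => (hg j p).continuousAt.eventually_ne (hgp j))
  have hpd : pd (fun q => ∏ j, f j q / g j q) i
      =ᶠ[nhds p] fun q => (∏ j, f j q / g j q) * logGrad f g a b q i := by
    filter_upwards [hnear] with q hq
    rw [pd, (hasFDerivAt_prod_div hf hg hq.1 hq.2).fderiv]
    simp [dotProduct_single]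
  rw [pd2, pd, hpd.fderiv_eq, ← Pi.mul_def,
    ((hasFDerivAt_prod_div hf hg hfp hgp).mul (hasFDerivAt_logGrad_apply hf hg hfp hgp i)).fderiv]
  simp only [add_apply, smul_apply, dotCLM_apply, dotProduct_single, mul_one, smul_eq_mul]
  ring

lemma Lb_prod_div {p : Fin n → ℝ} (hfp : ∀ j, f j p ≠ 0) (hgp : ∀ j, g j p ≠ 0) :
    Lb (fun q => ∏ j, f j q / g j q) p
      = (∏ j, f j p / g j p) / 2 * (wfForm p (logGrad f g a b p) (logGrad f g a b p)
          + ∑ j, (wfForm p (b j) (b j) / g j p ^ 2 - wfForm p (a j) (a j) / f j p ^ 2)) := by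
  have hHess : ∑ i, ∑ k, p i * (kdelta i k - p k) * logHess f g a b p i k
      = ∑ j, (wfForm p (b j) (b j) / g j p ^ 2 - wfForm p (a j) (a j) / f j p ^ 2) := by
    simp only [logHess, wfForm_apply, Finset.mul_sum, Finset.sum_div, ← Finset.sum_sub_distrib]
    refine (Finset.sum_congr rfl fun _ _ => Finset.sum_comm).trans ?_
    rw [Finset.sum_comm]
    exact Finset.sum_congr rfl fun _ _ => Finset.sum_congr rfl fun _ _ =>
      Finset.sum_congr rfl fun _ _ => by ring
  rw [← hHess, wfForm_apply]
  simp only [Lb, pd2_prod_div hf hg hfp hgp, mul_add, mul_left_comm _ (∏ j, f j p / g j p),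
    Finset.sum_add_distrib, ← Finset.mul_sum]
  ring

lemma Lb_prod_div_eq_zero {p : Fin n → ℝ} (hfp : ∀ j, f j p ≠ 0) (hgp : ∀ j, g j p ≠ 0)
    (hortho : ∀ j k, j ≠ k → wfForm p ((f j p)⁻¹ • a j - (g j p)⁻¹ • b j)
      ((f k p)⁻¹ • a k - (g k p)⁻¹ • b k) = 0)
    (hdiag : ∀ j, wfForm p ((f j p)⁻¹ • a j - (g j p)⁻¹ • b j)
      ((f j p)⁻¹ • a j - (g j p)⁻¹ • b j)
        = wfForm p (a j) (a j) / f j p ^ 2 - wfForm p (b j) (b j) / g j p ^ 2) :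
    Lb (fun q => ∏ j, f j q / g j q) p = 0 := by
  have hsq : wfForm p (logGrad f g a b p) (logGrad f g a b p)
      = ∑ j, (wfForm p (a j) (a j) / f j p ^ 2 - wfForm p (b j) (b j) / g j p ^ 2) := by
    simp only [logGrad, map_sum, LinearMap.sum_apply]
    refine Finset.sum_congr rfl fun j _ => ?_
    rw [Finset.sum_eq_single j (fun k _ hkj => hortho k j hkj) (by simp), hdiag]
  rw [Lb_prod_div hf hg hfp hgp, hsq, ← Finset.sum_add_distrib]
  simp

end AffineRatio

def extGrad (c : Fin (n + 1) → ℝ) : Fin n → ℝ := fun i => c i.succ - c 0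

lemma sum_mul_coordExt (c : Fin (n + 1) → ℝ) (q : Fin n → ℝ) :
    ∑ a, c a * coordExt q a = c 0 + extGrad c ⬝ᵥ q := by
  simp only [coordExt, Fin.sum_univ_succ, Fin.cons_zero, Fin.cons_succ, dotProduct, extGrad,
    mul_sub, mul_one, Finset.mul_sum, sub_mul, Finset.sum_sub_distrib]
  ring

lemma wfForm_extGrad (p : Fin n → ℝ) (c d : Fin (n + 1) → ℝ) :
    wfForm p (extGrad c) (extGrad d)
      = ∑ a, coordExt p a * (c a * d a)
          - (∑ a, coordExt p a * c a) * ∑ a, coordExt p a * d a := by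
  simp only [wfForm_eq_cov, extGrad, Fin.sum_univ_succ, coordExt, Fin.cons_zero, Fin.cons_succ,
    mul_sub, sub_mul, Finset.sum_sub_distrib, ← mul_assoc, ← Finset.sum_mul]
  rw [show ∑ i, p i * c 0 * d i.succ = c 0 * ∑ i, p i * d i.succ by
    rw [Finset.mul_sum]; exact Finset.sum_congr rfl fun _ _ => by ring]
  ring

lemma hasFDerivAt_sum_mul_coordExt (c : Fin (n + 1) → ℝ) (q : Fin n → ℝ) :
    HasFDerivAt (fun q => ∑ a, c a * coordExt q a) (dotCLM (extGrad c)) q := by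
  rw [funext (sum_mul_coordExt c)]
  exact ((dotCLM (extGrad c)).hasFDerivAt).const_add (c 0)

def mass (s : Finset (Fin (n + 1))) (q : Fin n → ℝ) : ℝ := ∑ a ∈ s, coordExt q a

def massGrad (s : Finset (Fin (n + 1))) : Fin n → ℝ := extGrad fun a => if a ∈ s then 1 else 0

lemma hasFDerivAt_mass (s : Finset (Fin (n + 1))) (q : Fin n → ℝ) :
    HasFDerivAt (mass s) (dotCLM (massGrad s)) q := by
  have h := hasFDerivAt_sum_mul_coordExt (fun a => if a ∈ s then 1 else 0) q
  simp only [ite_mul, one_mul, zero_mul, Finset.sum_ite_mem, Finset.univ_inter] at h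
  exact h

lemma wfForm_massGrad (p : Fin n → ℝ) (s t : Finset (Fin (n + 1))) :
    wfForm p (massGrad s) (massGrad t) = mass (s ∩ t) p - mass s p * mass t p := by
  rw [massGrad, massGrad, wfForm_extGrad]
  simp only [mul_ite, mul_one, mul_zero, Finset.sum_ite_mem, Finset.univ_inter, mass,
    Finset.inter_comm t s]

lemma mass_compl (s : Finset (Fin (n + 1))) (q : Fin n → ℝ) : mass sᶜ q = 1 - mass s q := by
  rw [mass, mass, eq_sub_iff_add_eq, Finset.sum_compl_add_sum]
  simp [Fin.sum_univ_succ, coordExt]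

lemma mass_pos {p : Fin n → ℝ} (hp : p ∈ stdSimplexO n) {s : Finset (Fin (n + 1))}
    (hs : s.Nonempty) : 0 < mass s p := by
  refine Finset.sum_pos (fun a _ => ?_) hs
  cases a using Fin.cases with
  | zero => simpa [coordExt] using hp.2
  | succ i => simpa [coordExt] using hp.1 i

section LittlerFormula

variable (idx : Fin n → Fin (n + 1))

def prefixSet (j : Fin n) : Finset (Fin (n + 1)) := (Finset.univ.filter (· < j)).image idx

variable {idx} (hinj : Function.Injective idx)
include hinj

lemma mem_prefixSet_iff {j k : Fin n} : idx k ∈ prefixSet idx j ↔ k < j := by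
  simp [prefixSet, hinj.eq_iff]

lemma littler_eq_prod_mass :
    (fun q => ∏ j : Fin n, coordExt q (idx j) /
        (1 - ∑ l ∈ Finset.univ.filter (· < j), coordExt q (idx l)))
      = fun q => ∏ j, mass {idx j} q / mass (prefixSet idx j)ᶜ q := by
  ext q
  refine Finset.prod_congr rfl fun j _ => ?_
  rw [mass_compl, mass, mass, prefixSet, Finset.sum_singleton, Finset.sum_image hinj.injOn]

lemma mass_compl_prefixSet_pos {p : Fin n → ℝ} (hp : p ∈ stdSimplexO n) (j : Fin n) :
    0 < mass (prefixSet idx j)ᶜ p :=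
  mass_pos hp ⟨idx j, by simp [mem_prefixSet_iff hinj]⟩

lemma wfForm_littler_factor_of_lt {p : Fin n → ℝ} (hp : p ∈ stdSimplexO n) {j k : Fin n}
    (hjk : j < k) :
    wfForm p ((mass {idx j} p)⁻¹ • massGrad {idx j}
        - (mass (prefixSet idx j)ᶜ p)⁻¹ • massGrad (prefixSet idx j)ᶜ)
      ((mass {idx k} p)⁻¹ • massGrad {idx k}
        - (mass (prefixSet idx k)ᶜ p)⁻¹ • massGrad (prefixSet idx k)ᶜ) = 0 := by
  have hss : {idx j} ∩ {idx k} = (∅ : Finset (Fin (n + 1))) :=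
    Finset.singleton_inter_of_notMem (by simpa using hinj.ne hjk.ne)
  have hsr : {idx j} ∩ (prefixSet idx k)ᶜ = ∅ :=
    Finset.singleton_inter_of_notMem (by simpa [mem_prefixSet_iff hinj] using hjk)
  have hrs : (prefixSet idx j)ᶜ ∩ {idx k} = {idx k} :=
    Finset.inter_singleton_of_mem (by simpa [mem_prefixSet_iff hinj] using hjk.le)
  have hrr : (prefixSet idx j)ᶜ ∩ (prefixSet idx k)ᶜ = (prefixSet idx k)ᶜ := by
    refine Finset.inter_eq_right.2 (Finset.compl_subset_compl.2 ?_)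
    exact Finset.image_subset_image fun l => by simpa using fun h : l < j => h.trans hjk
  simp only [map_sub, map_smul, LinearMap.sub_apply, LinearMap.smul_apply, smul_eq_mul,
    wfForm_massGrad, hss, hsr, hrs, hrr]
  have := (mass_pos hp (Finset.singleton_nonempty (idx j))).ne'
  have := (mass_pos hp (Finset.singleton_nonempty (idx k))).ne'
  have := (mass_compl_prefixSet_pos hinj hp j).ne'
  have := (mass_compl_prefixSet_pos hinj hp k).ne'
  rw [show mass ∅ p = 0 from Finset.sum_empty]
  field_simp
  ring

lemma wfForm_littler_factor_self {p : Fin n → ℝ} (hp : p ∈ stdSimplexO n) (j : Fin n) :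
    wfForm p ((mass {idx j} p)⁻¹ • massGrad {idx j}
        - (mass (prefixSet idx j)ᶜ p)⁻¹ • massGrad (prefixSet idx j)ᶜ)
      ((mass {idx j} p)⁻¹ • massGrad {idx j}
        - (mass (prefixSet idx j)ᶜ p)⁻¹ • massGrad (prefixSet idx j)ᶜ)
      = wfForm p (massGrad {idx j}) (massGrad {idx j}) / mass {idx j} p ^ 2
        - wfForm p (massGrad (prefixSet idx j)ᶜ) (massGrad (prefixSet idx j)ᶜ)
          / mass (prefixSet idx j)ᶜ p ^ 2 := by
  have hsr : {idx j} ∩ (prefixSet idx j)ᶜ = {idx j} :=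
    Finset.singleton_inter_of_mem (by simp [mem_prefixSet_iff hinj])
  have hrs : (prefixSet idx j)ᶜ ∩ {idx j} = {idx j} := by rw [Finset.inter_comm, hsr]
  simp only [map_sub, map_smul, LinearMap.sub_apply, LinearMap.smul_apply, smul_eq_mul,
    wfForm_massGrad, hsr, hrs, Finset.inter_self]
  have := (mass_pos hp (Finset.singleton_nonempty (idx j))).ne'
  have := (mass_compl_prefixSet_pos hinj hp j).ne'
  field_simp
  ring

theorem Lb_prod_mass_eq_zero {p : Fin n → ℝ} (hp : p ∈ stdSimplexO n) :
    Lb (fun q => ∏ j, mass {idx j} q / mass (prefixSet idx j)ᶜ q) p = 0 := by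
  refine Lb_prod_div_eq_zero (fun j => hasFDerivAt_mass _) (fun j => hasFDerivAt_mass _)
    (fun j => (mass_pos hp (Finset.singleton_nonempty (idx j))).ne')
    (fun j => (mass_compl_prefixSet_pos hinj hp j).ne') (fun j k hjk => ?_)
    (wfForm_littler_factor_self hinj hp)
  rcases hjk.lt_or_gt with h | h
  · exact wfForm_littler_factor_of_lt hinj hp h
  · rw [wfForm_comm]
    exact wfForm_littler_factor_of_lt hinj hp h

end LittlerFormula

end Littler

/-- Littler's formula is harmonic for the Wright–Fisher backward operator. -/
theorem stmt9 (n : ℕ) (idx : Fin n → Fin (n + 1)) (hinj : Function.Injective idx) :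
    ∀ p ∈ stdSimplexO n,
      Lb (fun q => ∏ j : Fin n,
          coordExt q (idx j) /
            (1 - ∑ l ∈ Finset.univ.filter (· < j), coordExt q (idx l))) p = 0 := by
  intro p hp
  rw [Littler.littler_eq_prod_mass hinj]
  exact Littler.Lb_prod_mass_eq_zero hinj hp
end
end
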